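/- arXiv:2107.04629 — 6 statements merged into one kernel-verified Lean document; each statement's English description precedes it below -/
import Mathlib

section
/- For every ε > 0 there exists t₀ such that for every t ≥ t₀ there exists n₀ such that for every n ≥ n₀ the following holds. There exist a graph collection 𝒢 = (G₁, …, G_{t²}) on the vertex set [n] and a bijection φ: E(K_{t,t}) → [t²] such that δ(𝒢) ≥ (1 − ε)n, yet there is no injective embedding ψ of V(K_{t,t}) into [n] such that for each edge e ∈ E(K_{t,t}) the image ψ(e) is an edge of G_{φ(e)}. -/
/-!
Colour `[n]` by residues modulo `k ≈ 3/ε`. Every graph of the collection is complete except for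
the edges between two residue classes, so it has minimum degree about `(1 - 2/k) n`. Left
vertices `l` of `K_{t,t}` carry a label in `Fin k`, every label occurring, and since `t ≥ k^k` the
right vertices `r` can be made to run over all maps `f_r : Fin k → Fin k`; the graph assigned to
the edge `lr` forbids the classes `f_r(l)` and `l`. For any placement `ψ` this is a diagonal trap:
take `r` with `f_r(a)` the residue of `ψ` at a chosen left vertex of label `a`, and `l` the chosen
left vertex whose label is the residue of `ψ(r)`; then `ψ` maps the edge `lr` between the two
forbidden classes.
-/

open SimpleGraph

/-- The degree of a vertex `v` in a graph `G`. -/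
noncomputable def deg {V : Type*} (G : SimpleGraph V) (v : V) : ℕ :=
  (G.neighborSet v).ncard

open Finset Function

namespace SimpleGraph

variable {V α : Type*}

def betweenColorClasses (c : V → α) (a b : α) : SimpleGraph V :=
  fromRel fun u w => c u = a ∧ c w = b

theorem degree_betweenColorClasses_le [Fintype V] [DecidableEq α] (c : V → α) (a b : α) (v : V)
    [Fintype ((betweenColorClasses c a b).neighborSet v)] :
    (betweenColorClasses c a b).degree v ≤ #{w | c w = a} + #{w | c w = b} := by
  classical
  calc (betweenColorClasses c a b).degree v
      ≤ #(({w | c w = a} : Finset V) ∪ ({w | c w = b} : Finset V)) := by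
        rw [← card_neighborFinset_eq_degree]
        refine card_le_card fun w hw => ?_
        rw [mem_neighborFinset, betweenColorClasses, fromRel_adj] at hw
        simp only [mem_union, mem_filter, mem_univ, true_and]
        tauto
    _ ≤ _ := card_union_le _ _

theorem card_le_degree_compl_betweenColorClasses [Fintype V] [DecidableEq α] (c : V → α)
    (a b : α) (v : V) [Fintype ((betweenColorClasses c a b)ᶜ.neighborSet v)] :
    Fintype.card V ≤
      (betweenColorClasses c a b)ᶜ.degree v + 1 + #{w | c w = a} + #{w | c w = b} := by
  classical
  have hV : 1 ≤ Fintype.card V := Fintype.card_pos_iff.mpr ⟨v⟩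
  have := degree_betweenColorClasses_le c a b v
  rw [degree_compl]
  omega

theorem exists_not_adj_compl_betweenColorClasses {L R : Type*} {lab : L → α}
    (hlab : Surjective lab) {dec : R → α → α} (hdec : Surjective dec) (c : V → α)
    (ψ : L ⊕ R → V) :
    ∃ l r, ¬ (betweenColorClasses c (dec r (lab l)) (lab l))ᶜ.Adj (ψ (.inl l)) (ψ (.inr r)) := by
  obtain ⟨r, hr⟩ := hdec fun a => c (ψ (.inl (surjInv hlab a)))
  refine ⟨surjInv hlab (c (ψ (.inr r))), r, fun h => (compl_adj _ _ _).1 h |>.2 ?_⟩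
  rw [surjInv_eq hlab, hr]
  exact (fromRel_adj _ _ _).2 ⟨((compl_adj _ _ _).1 h).1, .inl ⟨rfl, rfl⟩⟩

end SimpleGraph

theorem deg_eq_degree {V : Type*} (G : SimpleGraph V) (v : V) [Fintype (G.neighborSet v)] :
    deg G v = G.degree v := by
  rw [deg, ← Set.fintypeCard_eq_ncard, card_neighborSet_eq_degree]

theorem Fin.card_filter_ofNat_eq_le (n k : ℕ) [NeZero k] (a : Fin k) :
    #{w : Fin n | Fin.ofNat k w = a} ≤ n / k + 1 := by
  calc #{w : Fin n | Fin.ofNat k w = a}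
      ≤ #(range (n / k + 1)) := by
        refine card_le_card_of_injOn (fun w => w.val / k) (fun w _ => ?_) fun w₁ h₁ w₂ h₂ h => ?_
        · simpa [Nat.lt_succ_iff] using Nat.div_le_div_right w.isLt.le
        · simp only [coe_filter, mem_univ, true_and, Set.mem_ofPred_eq, Fin.ext_iff,
            Fin.val_ofNat] at h₁ h₂
          exact Fin.ext (Nat.div_add_mod w₁ k ▸ Nat.div_add_mod w₂ k ▸ by simp_all)
    _ = n / k + 1 := card_range _

theorem le_deg_compl_betweenColorClasses_ofNat (n k : ℕ) [NeZero k] (a b : Fin k) (v : Fin n) :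
    n ≤ deg (betweenColorClasses (fun w : Fin n => Fin.ofNat k w) a b)ᶜ v + 1 +
      2 * (n / k + 1) := by
  classical
  have := card_le_degree_compl_betweenColorClasses (fun w : Fin n => Fin.ofNat k w) a b v
  have := Fin.card_filter_ofNat_eq_le n k a
  have := Fin.card_filter_ofNat_eq_le n k b
  rw [Fintype.card_fin] at *
  rw [deg_eq_degree]
  omega

noncomputable def equivEdgeSetCompleteBipartiteGraph (W₁ W₂ : Type*) :
    W₁ × W₂ ≃ (completeBipartiteGraph W₁ W₂).edgeSet :=
  (Equiv.ofInjective (fun x : W₁ × W₂ => s(.inl x.1, .inr x.2)) fun x y h => by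
      simpa [Prod.ext_iff] using h).trans
    (Equiv.setCongr edgeSet_completeBipartiteGraph.symm)

@[simp]
theorem coe_equivEdgeSetCompleteBipartiteGraph {W₁ W₂ : Type*} (x : W₁ × W₂) :
    (equivEdgeSetCompleteBipartiteGraph W₁ W₂ x : Sym2 (W₁ ⊕ W₂)) = s(.inl x.1, .inr x.2) :=
  rfl

theorem one_sub_mul_le_of_le_add {ε : ℝ} (hε : 0 < ε) {k n d : ℕ} (hk : 3 / ε ≤ k)
    (hn : 9 / ε ≤ n) (hd : n ≤ d + 1 + 2 * (n / k + 1)) : (1 - ε) * n ≤ d := by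
  have hk0 : (0 : ℝ) < k := (by positivity : (0 : ℝ) < 3 / ε).trans_le hk
  have hdiv : ((n / k : ℕ) : ℝ) ≤ ε * n / 3 := by
    refine Nat.cast_div_le.trans ((div_le_iff₀ hk0).2 ?_)
    rw [div_le_iff₀ hε] at hk
    nlinarith [(n.cast_nonneg : (0 : ℝ) ≤ n)]
  have h9 : 9 ≤ ε * n := by rwa [div_le_iff₀ hε, mul_comm] at hn
  have hd' : (n : ℝ) ≤ d + 1 + 2 * ((n / k : ℕ) + 1) := by exact_mod_cast hd
  linarith

/-- For every `ε > 0`, for all large `t` and all large `n`, there are a graph collection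
`𝒢 = (G_1, …, G_{t²})` on `[n]` and a bijection `φ : E(K_{t,t}) → [t²]` with `δ(𝒢) ≥ (1 - ε)n`,
such that no injective embedding `ψ` of `V(K_{t,t})` into `[n]` places the image of each edge `e`
of `K_{t,t}` inside `G_{φ(e)}`. -/
theorem no_easy_generalisation (ε : ℝ) (hε : 0 < ε) :
    ∃ t₀ : ℕ, ∀ t : ℕ, t₀ ≤ t → ∃ n₀ : ℕ, ∀ n : ℕ, n₀ ≤ n →
      ∃ (𝒢 : Fin (t ^ 2) → SimpleGraph (Fin n))
        (φ : (completeBipartiteGraph (Fin t) (Fin t)).edgeSet → Fin (t ^ 2)),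
        Function.Bijective φ ∧
        (∀ i v, (1 - ε) * n ≤ (deg (𝒢 i) v : ℝ)) ∧
        ¬ ∃ ψ : (Fin t ⊕ Fin t) → Fin n, Function.Injective ψ ∧
            ∀ e : (completeBipartiteGraph (Fin t) (Fin t)).edgeSet,
              Sym2.map ψ (e : Sym2 (Fin t ⊕ Fin t)) ∈ (𝒢 (φ e)).edgeSet := by
  obtain ⟨k, hk⟩ : ∃ k : ℕ, 3 / ε ≤ k := ⟨⌈3 / ε⌉₊, Nat.le_ceil _⟩
  have hk0 : 0 < k := by exact_mod_cast (by positivity : (0 : ℝ) < 3 / ε).trans_le hk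
  have : NeZero k := ⟨hk0.ne'⟩
  refine ⟨k ^ k, fun t ht => ⟨⌈9 / ε⌉₊, fun n hn => ?_⟩⟩
  obtain ⟨dec, hdec⟩ : ∃ dec : Fin t → Fin k → Fin k, Surjective dec :=
    exists_surjective_iff.2 ⟨⟨fun _ _ => 0⟩, Embedding.nonempty_of_card_le (by simpa using ht)⟩
  have hlab : Surjective fun i : Fin t => Fin.ofNat k i := fun a =>
    ⟨Fin.castLE ((Nat.le_self_pow hk0.ne' k).trans ht) a, Fin.ofNat_val_eq_self a⟩
  let c : Fin n → Fin k := fun w => Fin.ofNat k w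
  let H : Fin t × Fin t → SimpleGraph (Fin n) := fun p =>
    (betweenColorClasses c (dec p.2 (Fin.ofNat k p.1)) (Fin.ofNat k p.1))ᶜ
  let E := equivEdgeSetCompleteBipartiteGraph (Fin t) (Fin t)
  let P : Fin t × Fin t ≃ Fin (t ^ 2) := finProdFinEquiv.trans (finCongr (sq t).symm)
  refine ⟨H ∘ P.symm, E.symm.trans P, Equiv.bijective _, fun m v => ?_, ?_⟩
  · exact one_sub_mul_le_of_le_add hε hk (Nat.ceil_le.1 hn)
      (le_deg_compl_betweenColorClasses_ofNat n k _ _ v)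
  · rintro ⟨ψ, -, hψ⟩
    obtain ⟨l, r, hlr⟩ := exists_not_adj_compl_betweenColorClasses hlab hdec c ψ
    exact hlr (by simpa [E, P, H] using hψ (E (l, r)))
end

section
/- For all ε, α > 0 there exists n₀ such that the following holds for every n ≥ n₀, every δ > 0, and every m ≤ n/ε. Let 𝒢 = (G₁, …, G_m) be a graph collection on the vertex set [n] and suppose V ⊆ [n] is such that d_{G_i}(v, V) ≥ (δ + ε)n for every i ∈ [m] and every v ∈ [n]. Let k ∈ ℕ and let n₁, …, n_k ≥ αn be integers with n₁ + ⋯ + n_k = |V|. Then there is a partition V = V₁ ∪ ⋯ ∪ V_k such that for each i ∈ [k], |V_i| = n_i, and d_{G_j}(v, V_i) ≥ (δ + ε/2)n_i for every j ∈ [m] and every v ∈ [n]. -/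
open SimpleGraph

noncomputable def degOn {V : Type*} (G : SimpleGraph V) (v : V) (U : Set V) : ℕ :=
  (G.neighborSet v ∩ U).ncard

/-!
Split off the parts one at a time, each as a uniformly random subset of the right size of what
is left. For a fixed graph and vertex, the number of neighbours caught by a random `s`-subset is
hypergeometric; comparing consecutive terms `C(d, t) C(e, s - t)` of Vandermonde's sum shows that
its lower tail below `(β - η) s` has probability at most `s e^{-η² s / 8}`. Since all parts have
linear size and there are only `m n ≤ n² / ε` pairs (graph, vertex), a union bound leaves a
choice in which both the new part and the remainder keep density `β - η`. With `k ≤ 1 / α`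
parts and `η = ε α / 4`, the accumulated loss is at most `ε / 4`.
-/

open Finset Real

lemma choose_mul_choose_le_add_choose {d e s t : ℕ} (hts : t ≤ s) :
    d.choose t * e.choose (s - t) ≤ (d + e).choose s := by
  rw [Nat.add_choose_eq]
  exact single_le_sum (f := fun ij : ℕ × ℕ => d.choose ij.1 * e.choose ij.2)
    (fun _ _ => Nat.zero_le _) (a := (t, s - t)) (mem_antidiagonal.2 (Nat.add_sub_of_le hts))

lemma choose_mul_choose_mul_eq {d e s t : ℕ} (hts : t < s) :
    d.choose t * e.choose (s - t) * ((d - t) * (s - t)) =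
      d.choose (t + 1) * e.choose (s - (t + 1)) * ((t + 1) * (e - (s - (t + 1)))) := by
  have hd := Nat.choose_succ_right_eq d t
  have he := Nat.choose_succ_right_eq e (s - (t + 1))
  rw [show s - (t + 1) + 1 = s - t by omega] at he
  calc d.choose t * e.choose (s - t) * ((d - t) * (s - t))
      = (d.choose t * (d - t)) * (e.choose (s - t) * (s - t)) := by ring
    _ = (d.choose (t + 1) * (t + 1)) * (e.choose (s - (t + 1)) * (e - (s - (t + 1)))) := by
      rw [hd, he]
    _ = _ := by ring

lemma le_pow_sub_mul_of_le_mul {f : ℕ → ℝ} {r : ℝ} {N : ℕ} (hr : 0 ≤ r)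
    (hf : ∀ t < N, f t ≤ r * f (t + 1)) {t : ℕ} (ht : t ≤ N) : f t ≤ r ^ (N - t) * f N := by
  induction ht using Nat.decreasingInduction with
  | self => simp
  | of_succ t htN ih =>
    calc f t ≤ r * f (t + 1) := hf t htN
      _ ≤ r * (r ^ (N - (t + 1)) * f N) := mul_le_mul_of_nonneg_left ih hr
      _ = r ^ (N - t) * f N := by
        rw [← mul_assoc, ← pow_succ', show N - (t + 1) + 1 = N - t by omega]

/-- For `T = t`, `S = s`, `D = d`, `W = d + e`, the last inequality says that the ratio
`C(d, t) C(e, s - t) / (C(d, t + 1) C(e, s - t - 1))` of consecutive terms is at most `1 - η / 4`,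
see `choose_mul_choose_mul_eq`. -/
lemma hypergeometric_ratio_bound {T S D W β η : ℝ} (hη : 0 < η) (hT : 0 ≤ T) (hDW : D ≤ W)
    (hβ : β * W ≤ D) (hSW : S ≤ W) (hηS : 16 ≤ η * S) (hTS : T ≤ (β - η / 2) * S) :
    T + 8 ≤ S ∧ T + 8 ≤ D ∧
      (T + 1) * (W - D - (S - (T + 1))) ≤ (1 - η / 4) * ((D - T) * (S - T)) := by
  have hS : 0 < S := by nlinarith
  have hβ1 : β ≤ 1 := by nlinarith
  have hTS8 : T + 8 ≤ S := by nlinarith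
  have hβS : β * S ≤ D := by nlinarith
  refine ⟨hTS8, by nlinarith, ?_⟩
  have hmain : (η / 2) * S * W ≤ D * S - T * W := by nlinarith
  have hprod : (D - T) * (S - T) ≤ W * S := by nlinarith
  nlinarith

lemma choose_mul_choose_le_exp_mul {d e s t : ℕ} {β η : ℝ} (hη : 0 < η)
    (hβ : β * (d + e) ≤ d) (hs : s ≤ d + e) (hηs : 16 ≤ η * s)
    (ht : (t : ℝ) ≤ (β - η / 2) * s) :
    t < s ∧ (d.choose t * e.choose (s - t) : ℝ) ≤
      exp (-(η / 4)) * (d.choose (t + 1) * e.choose (s - (t + 1))) := by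
  obtain ⟨hts8, htd8, hratio⟩ := hypergeometric_ratio_bound hη t.cast_nonneg
    (le_add_of_nonneg_right e.cast_nonneg) hβ (by exact_mod_cast hs) hηs ht
  have hts : t < s := by exact_mod_cast (by linarith : (t : ℝ) < s)
  have htd : t < d := by exact_mod_cast (by linarith : (t : ℝ) < d)
  refine ⟨hts, ?_⟩
  set X : ℝ := (((d - t) * (s - t) : ℕ) : ℝ)
  set Y : ℝ := (((t + 1) * (e - (s - (t + 1))) : ℕ) : ℝ)
  have hX : X = (d - t) * (s - t) := by
    simp only [X]; push_cast [htd.le, hts.le]; ring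
  have hXpos : 0 < X := by rw [hX]; nlinarith
  have hY : Y ≤ exp (-(η / 4)) * X := by
    rcases le_or_gt (s - (t + 1)) e with hse | hse
    · have hexp : 1 - η / 4 ≤ exp (-(η / 4)) := by linarith [add_one_le_exp (-(η / 4))]
      refine le_trans ?_ (mul_le_mul_of_nonneg_right hexp hXpos.le)
      simp only [Y]; push_cast [hse, (by omega : t + 1 ≤ s)]; rw [hX]; linarith [hratio]
    · simp only [Y, Nat.sub_eq_zero_of_le hse.le, mul_zero, Nat.cast_zero]; positivity
  have hEq : (d.choose t * e.choose (s - t) : ℝ) * X =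
      (d.choose (t + 1) * e.choose (s - (t + 1))) * Y := by
    simp only [X, Y]; exact_mod_cast choose_mul_choose_mul_eq hts
  refine le_of_mul_le_mul_right ?_ hXpos
  calc (d.choose t * e.choose (s - t) : ℝ) * X
      = (d.choose (t + 1) * e.choose (s - (t + 1))) * Y := hEq
    _ ≤ (d.choose (t + 1) * e.choose (s - (t + 1))) * (exp (-(η / 4)) * X) :=
      mul_le_mul_of_nonneg_left hY (by positivity)
    _ = _ := by ring

lemma choose_mul_choose_le_exp_mul_choose {d e s t : ℕ} {β η : ℝ} (hη : 0 < η)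
    (hβ : β * (d + e) ≤ d) (hs : s ≤ d + e) (hηs : 16 ≤ η * s)
    (ht : (t : ℝ) < (β - η) * s) :
    t < s ∧ (d.choose t * e.choose (s - t) : ℝ) ≤ exp (-(η ^ 2 * s / 8)) * (d + e).choose s := by
  -- The terms grow by a factor `e^{η/4}` from `t` up to `N`, at least `η s / 2` steps later,
  -- and the term at `N` is bounded by Vandermonde's sum.
  set a : ℕ → ℝ := fun t => d.choose t * e.choose (s - t)
  set N := ⌈(β - η / 2) * s⌉₊
  have hstep : ∀ t < N, t < s ∧ a t ≤ exp (-(η / 4)) * a (t + 1) := fun t ht =>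
    choose_mul_choose_le_exp_mul hη hβ hs hηs (Nat.lt_ceil.1 ht).le
  have htN : t < N := Nat.lt_ceil.2 (by nlinarith)
  have hNs : N ≤ s := by have := (hstep (N - 1) (by omega)).1; omega
  refine ⟨by omega, ?_⟩
  have hgap : η * s / 2 ≤ ((N - t : ℕ) : ℝ) := by
    rw [Nat.cast_sub htN.le]; linarith [Nat.le_ceil ((β - η / 2) * s)]
  have hpow : exp (-(η / 4)) ^ (N - t) ≤ exp (-(η ^ 2 * s / 8)) := by
    rw [← exp_nat_mul, exp_le_exp]; nlinarith
  have haN : a N ≤ (d + e).choose s := by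
    simp only [a]; exact_mod_cast choose_mul_choose_le_add_choose hNs
  calc a t ≤ exp (-(η / 4)) ^ (N - t) * a N :=
        le_pow_sub_mul_of_le_mul (exp_pos _).le (fun t ht => (hstep t ht).2) htN.le
    _ ≤ exp (-(η ^ 2 * s / 8)) * (d + e).choose s := by gcongr

section

variable {α : Type*} [DecidableEq α]

lemma card_powersetCard_filter_card_inter_eq_le (W D : Finset α) (s t : ℕ) :
    #{S ∈ W.powersetCard s | #(S ∩ D) = t} ≤ (#(W ∩ D)).choose t * (#(W \ D)).choose (s - t) := by
  rw [← card_powersetCard t (W ∩ D), ← card_powersetCard (s - t) (W \ D), ← card_product]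
  refine card_le_card_of_injOn (fun S => (S ∩ D, S \ D)) ?_ ?_
  · intro S hS
    simp only [coe_filter, mem_powersetCard, Set.mem_ofPred_eq] at hS
    obtain ⟨⟨hSW, hS⟩, hSD⟩ := hS
    have := card_inter_add_card_sdiff S D
    simp only [coe_product, Set.mem_prod, mem_coe, mem_powersetCard]
    exact ⟨⟨inter_subset_inter_right hSW, hSD⟩, sdiff_subset_sdiff hSW le_rfl, by omega⟩
  · intro S _ S' _ h
    simp only [Prod.mk.injEq] at h
    rw [← sdiff_union_inter S D, ← sdiff_union_inter S' D, h.1, h.2]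

lemma card_powersetCard_filter_card_inter_lt_le {W D : Finset α} {β η : ℝ} {s : ℕ}
    (hη : 0 < η) (hsW : s ≤ #W) (hηs : 16 ≤ η * s) (hD : β * #W ≤ #(W ∩ D)) :
    (#{S ∈ W.powersetCard s | (#(S ∩ D) : ℝ) < (β - η) * s} : ℝ) ≤
      s * exp (-(η ^ 2 * s / 8)) * (#W).choose s := by
  have hde : #(W ∩ D) + #(W \ D) = #W := card_inter_add_card_sdiff W D
  have hterm : ∀ t : ℕ, (t : ℝ) < (β - η) * s → t < s ∧
      ((#(W ∩ D)).choose t * (#(W \ D)).choose (s - t) : ℝ) ≤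
        exp (-(η ^ 2 * s / 8)) * (#W).choose s := fun t ht => by
    have hβ : β * ((#(W ∩ D) : ℝ) + #(W \ D)) ≤ #(W ∩ D) := by rw [← Nat.cast_add, hde]; exact hD
    have := choose_mul_choose_le_exp_mul_choose hη hβ (hde ▸ hsW) hηs ht
    rwa [hde] at this
  set B := {S ∈ W.powersetCard s | (#(S ∩ D) : ℝ) < (β - η) * s}
  set T := (range s).filter (fun t : ℕ => (t : ℝ) < (β - η) * s)
  have hmaps : Set.MapsTo (fun S => #(S ∩ D)) B T := fun S hS =>
    have hS := (mem_filter.1 hS).2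
    mem_filter.2 ⟨mem_range.2 (hterm _ hS).1, hS⟩
  have hfiber : ∀ t ∈ T, (#{S ∈ B | #(S ∩ D) = t} : ℝ) ≤
      (#(W ∩ D)).choose t * (#(W \ D)).choose (s - t) := fun t _ => by
    have hBP : B ⊆ W.powersetCard s := filter_subset _ _
    exact_mod_cast (card_le_card (filter_subset_filter (fun S => #(S ∩ D) = t) hBP)).trans
      (card_powersetCard_filter_card_inter_eq_le W D s t)
  have hTs : (#T : ℝ) ≤ s := by exact_mod_cast (card_filter_le _ _).trans (card_range s).le
  rw [card_eq_sum_card_fiberwise hmaps, Nat.cast_sum]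
  calc _ ≤ ∑ t ∈ T, exp (-(η ^ 2 * s / 8)) * (#W).choose s :=
        sum_le_sum fun t ht => (hfiber t ht).trans (hterm t (mem_filter.1 ht).2).2
    _ = #T * (exp (-(η ^ 2 * s / 8)) * (#W).choose s) := by rw [sum_const, nsmul_eq_mul]
    _ ≤ s * exp (-(η ^ 2 * s / 8)) * (#W).choose s := by rw [mul_assoc]; gcongr

lemma card_powersetCard_filter_sdiff {W : Finset α} {s : ℕ} (hs : s ≤ #W)
    (p : Finset α → Prop) [DecidablePred p] :
    #{S ∈ W.powersetCard s | p (W \ S)} = #{S ∈ W.powersetCard (#W - s) | p S} := by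
  refine card_nbij' (W \ ·) (W \ ·) ?_ ?_ ?_ ?_
  · intro S hS
    simp only [coe_filter, mem_powersetCard, Set.mem_ofPred_eq] at hS ⊢
    exact ⟨⟨sdiff_subset, by rw [card_sdiff_of_subset hS.1.1, hS.1.2]⟩, hS.2⟩
  · intro S hS
    simp only [coe_filter, mem_powersetCard, Set.mem_ofPred_eq] at hS ⊢
    refine ⟨⟨sdiff_subset, by rw [card_sdiff_of_subset hS.1.1, hS.1.2]; omega⟩, ?_⟩
    rw [Finset.sdiff_sdiff_eq_self hS.1.1]
    exact hS.2
  · intro S hS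
    simp only [coe_filter, mem_powersetCard, Set.mem_ofPred_eq] at hS
    exact Finset.sdiff_sdiff_eq_self hS.1.1
  · intro S hS
    simp only [coe_filter, mem_powersetCard, Set.mem_ofPred_eq] at hS
    exact Finset.sdiff_sdiff_eq_self hS.1.1

def IsDenseFor {ι : Type*} (N : ι → Finset α) (β : ℝ) (S : Finset α) : Prop :=
  ∀ i, β * #S ≤ #(S ∩ N i)

lemma IsDenseFor.mono {ι : Type*} {N : ι → Finset α} {β β' : ℝ} {S : Finset α}
    (hS : IsDenseFor N β S) (hβ : β' ≤ β) : IsDenseFor N β' S :=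
  fun i => le_trans (by gcongr) (hS i)

variable {ι : Type*} [Fintype ι] {N : ι → Finset α} {W : Finset α} {β η : ℝ}

open Classical in
lemma card_powersetCard_filter_not_isDenseFor_le {s : ℕ} (hη : 0 < η) (hs : s ≤ #W)
    (hηs : 16 ≤ η * s) (hW : IsDenseFor N β W) :
    (#{S ∈ W.powersetCard s | ¬IsDenseFor N (β - η) S} : ℝ) ≤
      Fintype.card ι * (s * exp (-(η ^ 2 * s / 8))) * (#W).choose s := by
  have hsub : {S ∈ W.powersetCard s | ¬IsDenseFor N (β - η) S} ⊆
      univ.biUnion fun i => {S ∈ W.powersetCard s | (#(S ∩ N i) : ℝ) < (β - η) * s} := by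
    intro S hS
    obtain ⟨hSP, hS⟩ := mem_filter.1 hS
    obtain ⟨i, hi⟩ := not_forall.1 hS
    rw [(mem_powersetCard.1 hSP).2] at hi
    exact mem_biUnion.2 ⟨i, mem_univ _, mem_filter.2 ⟨hSP, not_le.1 hi⟩⟩
  calc (#{S ∈ W.powersetCard s | ¬IsDenseFor N (β - η) S} : ℝ)
      ≤ ∑ i, (#{S ∈ W.powersetCard s | (#(S ∩ N i) : ℝ) < (β - η) * s} : ℝ) := by
        exact_mod_cast (card_le_card hsub).trans card_biUnion_le
    _ ≤ ∑ _i : ι, s * exp (-(η ^ 2 * s / 8)) * (#W).choose s :=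
        sum_le_sum fun i _ => card_powersetCard_filter_card_inter_lt_le hη hs hηs (hW i)
    _ = _ := by rw [sum_const, card_univ, nsmul_eq_mul]; ring

lemma exists_isDenseFor_subset_sdiff {s : ℕ} {L : ℝ} (hη : 0 < η) (hW : IsDenseFor N β W)
    (hLs : L ≤ s) (hLs' : L ≤ (#W - s : ℕ)) (hηL : 16 ≤ η * L)
    (hsmall : 2 * Fintype.card ι * #W * exp (-(η ^ 2 * L / 8)) < 1) :
    ∃ S ⊆ W, #S = s ∧ IsDenseFor N (β - η) S ∧ IsDenseFor N (β - η) (W \ S) := by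
  classical
  have hs : s ≤ #W := by
    have : 0 < #W - s := by exact_mod_cast (by nlinarith : (0 : ℝ) < (#W - s : ℕ))
    omega
  have htail : ∀ s' : ℕ, L ≤ s' → s' ≤ #W →
      (#{S ∈ W.powersetCard s' | ¬IsDenseFor N (β - η) S} : ℝ) ≤
        Fintype.card ι * (#W * exp (-(η ^ 2 * L / 8))) * (#W).choose s' := fun s' hLs' hs' =>
    (card_powersetCard_filter_not_isDenseFor_le hη hs' (by nlinarith) hW).trans (by gcongr)
  have h₁ := htail s hLs hs
  have h₂ := htail (#W - s) hLs' (Nat.sub_le _ _)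
  rw [← card_powersetCard_filter_sdiff hs, Nat.choose_symm hs] at h₂
  have hC : (0 : ℝ) < (#W).choose s := by exact_mod_cast Nat.choose_pos hs
  have hbad : #({S ∈ W.powersetCard s | ¬IsDenseFor N (β - η) S} ∪
      {S ∈ W.powersetCard s | ¬IsDenseFor N (β - η) (W \ S)}) < #(W.powersetCard s) := by
    refine (card_union_le _ _).trans_lt ?_
    rw [card_powersetCard, ← Nat.cast_lt (α := ℝ), Nat.cast_add]
    nlinarith
  obtain ⟨S, hSP, hS⟩ := exists_mem_notMem_of_card_lt_card hbad
  simp only [mem_union, mem_filter, not_or, not_and, not_not] at hS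
  obtain ⟨hSW, hSs⟩ := mem_powersetCard.1 hSP
  exact ⟨S, hSW, hSs, hS.1 hSP, hS.2 hSP⟩

end

section

variable {α : Type*}

def IsPartitionOf {ι : Type*} (W : Finset α) (P : ι → Finset α) : Prop :=
  (∀ i j, i ≠ j → Disjoint (P i) (P j)) ∧ ∀ v, v ∈ W ↔ ∃ i, v ∈ P i

lemma isPartitionOf_empty (P : Fin 0 → Finset α) : IsPartitionOf ∅ P :=
  ⟨fun i => i.elim0, fun v => by simp⟩

lemma IsPartitionOf.cons [DecidableEq α] {k : ℕ} {W S : Finset α} {P : Fin k → Finset α}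
    (hP : IsPartitionOf (W \ S) P) (hSW : S ⊆ W) :
    IsPartitionOf W (Fin.cons S P : Fin (k + 1) → Finset α) := by
  obtain ⟨hdisj, hcover⟩ := hP
  have hSP : ∀ i, Disjoint S (P i) := fun i =>
    disjoint_left.2 fun v hvS hvP => (mem_sdiff.1 ((hcover v).2 ⟨i, hvP⟩)).2 hvS
  refine ⟨?_, fun v => ?_⟩
  · intro i j hij
    cases i using Fin.cases <;> cases j using Fin.cases
    · exact absurd rfl hij
    · simpa using hSP _
    · simpa using (hSP _).symm
    · simpa using hdisj _ _ (fun h => hij (by rw [h]))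
  · rw [Fin.exists_fin_succ]
    simp only [Fin.cons_zero, Fin.cons_succ, ← hcover, mem_sdiff]
    by_cases hvS : v ∈ S
    · simp [hvS, hSW hvS]
    · simp [hvS]

lemma exists_partition_isDenseFor [DecidableEq α] [Fintype α] {ι : Type*} [Fintype ι]
    {N : ι → Finset α} {η L : ℝ} (hη : 0 < η) (hηL : 16 ≤ η * L)
    (hsmall : 2 * Fintype.card ι * Fintype.card α * exp (-(η ^ 2 * L / 8)) < 1)
    (k : ℕ) (sizes : Fin k → ℕ) (W : Finset α) (β : ℝ) (hW : IsDenseFor N β W)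
    (hL : ∀ i, L ≤ sizes i) (hsum : ∑ i, sizes i = #W) :
    ∃ P : Fin k → Finset α, IsPartitionOf W P ∧ (∀ i, #(P i) = sizes i) ∧
      ∀ i, IsDenseFor N (β - k * η) (P i) := by
  induction k generalizing W β with
  | zero =>
    rw [Fin.sum_univ_zero, eq_comm, card_eq_zero] at hsum
    subst hsum
    exact ⟨Fin.elim0, isPartitionOf_empty _, fun i => i.elim0, fun i => i.elim0⟩
  | succ k ih =>
    rw [Fin.sum_univ_succ] at hsum
    obtain ⟨S, hSW, hSs, hS, hWS⟩ : ∃ S ⊆ W, #S = sizes 0 ∧ IsDenseFor N (β - η) S ∧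
        IsDenseFor N (β - η) (W \ S) := by
      rcases Nat.eq_zero_or_pos k with rfl | hk
      · refine ⟨W, subset_rfl, by simpa using hsum.symm, hW.mono (by linarith), ?_⟩
        simp [IsDenseFor]
      · have hrest : L ≤ (#W - sizes 0 : ℕ) := by
          rw [← hsum, Nat.add_sub_cancel_left]
          refine (hL (Fin.succ ⟨0, hk⟩)).trans ?_
          exact_mod_cast single_le_sum (f := fun i : Fin k => sizes i.succ) (by simp)
            (mem_univ _)
        refine exists_isDenseFor_subset_sdiff hη hW (hL 0) hrest hηL (lt_of_le_of_lt ?_ hsmall)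
        gcongr
        exact_mod_cast card_le_univ W
    obtain ⟨P, hP, hPs, hPd⟩ := ih (fun i => sizes i.succ) (W \ S) (β - η) hWS
      (fun i => hL i.succ) (by rw [card_sdiff_of_subset hSW, hSs]; omega)
    refine ⟨Fin.cons S P, hP.cons hSW, Fin.cases hSs hPs, Fin.cases ?_ fun i => ?_⟩
    · exact hS.mono (by push_cast; nlinarith)
    · convert hPd i using 1
      · push_cast; ring
      · rfl

end

lemma degOn_coe_finset {V : Type*} [Fintype V] [DecidableEq V] (G : SimpleGraph V)
    [DecidableRel G.Adj] (v : V) (U : Finset V) : degOn G v ↑U = #(U ∩ G.neighborFinset v) := by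
  rw [degOn, ← Set.ncard_coe_finset]
  congr 1
  ext u
  simp [and_comm]

lemma isDenseFor_neighborFinset {n m : ℕ} (𝒢 : Fin m → SimpleGraph (Fin n))
    [∀ j, DecidableRel (𝒢 j).Adj] {V : Finset (Fin n)} {β : ℝ} (hβ : 0 ≤ β)
    (hV : ∀ j v, β * n ≤ (degOn (𝒢 j) v ↑V : ℝ)) :
    IsDenseFor (fun p : Fin m × Fin n => (𝒢 p.1).neighborFinset p.2) β V := fun p => by
  have hVn : (#V : ℝ) ≤ n := by exact_mod_cast (card_le_univ V).trans_eq (Fintype.card_fin n)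
  have := hV p.1 p.2
  rw [degOn_coe_finset] at this
  nlinarith

lemma eventually_linear_bounds {ε α η : ℝ} (hε : 0 < ε) (hα : 0 < α) (hη : 0 < η) :
    ∀ᶠ n : ℕ in Filter.atTop, 1 ≤ (n : ℝ) ∧ 16 ≤ η * (α * n) ∧
      2 * (n / ε * n) * n * exp (-(η ^ 2 * (α * n) / 8)) < 1 := by
  have hn := tendsto_natCast_atTop_atTop (R := ℝ)
  have hexp := ((tendsto_rpow_mul_exp_neg_mul_atTop_nhds_zero (3 : ℕ) (η ^ 2 * α / 8)
    (by positivity)).comp hn).eventually (gt_mem_nhds (by positivity : 0 < ε / 2))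
  filter_upwards [hn.eventually_ge_atTop 1,
    (hn.const_mul_atTop (by positivity : 0 < η * α)).eventually_ge_atTop 16, hexp]
    with n hn1 hn16 hexp
  simp only [Function.comp, rpow_natCast, neg_mul] at hexp
  refine ⟨hn1, by linarith [mul_assoc η α n], ?_⟩
  calc 2 * (n / ε * n) * n * exp (-(η ^ 2 * (α * n) / 8))
      = 2 / ε * (n ^ 3 * exp (-(η ^ 2 * α / 8 * n))) := by field_simp
    _ < 2 / ε * (ε / 2) := by gcongr
    _ = 1 := by field_simp

/-- For all `ε, α > 0` there is `n₀` such that for all `n ≥ n₀`, all `δ > 0` and `m ≤ n/ε`: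
if `𝒢 = (G_1, …, G_m)` is a graph collection on `[n]` and `V ⊆ [n]` satisfies
`d_{G_i}(v, V) ≥ (δ + ε)n` for all `i` and `v`, then for any `n_1, …, n_k ≥ αn` summing to `|V|`
there is a partition `V = V_1 ∪ ⋯ ∪ V_k` with `|V_i| = n_i` and
`d_{G_j}(v, V_i) ≥ (δ + ε/2)n_i` for all `j ∈ [m]`, `v ∈ [n]`. -/
theorem partition_into_linear_parts (ε α : ℝ) (hε : 0 < ε) (hα : 0 < α) :
    ∃ n₀ : ℕ, ∀ n : ℕ, n₀ ≤ n → ∀ δ : ℝ, 0 < δ → ∀ m : ℕ, (m : ℝ) ≤ n / ε →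
      ∀ 𝒢 : Fin m → SimpleGraph (Fin n), ∀ V : Finset (Fin n),
        (∀ (i : Fin m) (v : Fin n), (δ + ε) * n ≤ (degOn (𝒢 i) v ↑V : ℝ)) →
        ∀ (k : ℕ) (nn : Fin k → ℕ),
          (∀ i, α * n ≤ (nn i : ℝ)) → (∑ i, nn i) = V.card →
          ∃ P : Fin k → Finset (Fin n),
            (∀ i j, i ≠ j → Disjoint (P i) (P j)) ∧
            (∀ v : Fin n, v ∈ V ↔ ∃ i, v ∈ P i) ∧
            (∀ i, (P i).card = nn i) ∧
            (∀ (i : Fin k) (j : Fin m) (v : Fin n),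
              (δ + ε / 2) * (nn i) ≤ (degOn (𝒢 j) v ↑(P i) : ℝ)) := by
  classical
  set η := ε * α / 4
  have hη : 0 < η := by positivity
  obtain ⟨n₀, hn₀⟩ := Filter.eventually_atTop.1 (eventually_linear_bounds hε hα hη)
  refine ⟨n₀, fun n hn δ hδ m hm 𝒢 V hV k nn hnn hsum => ?_⟩
  obtain ⟨hn1, hηL, hexp⟩ := hn₀ n hn
  have hsmall : 2 * Fintype.card (Fin m × Fin n) * Fintype.card (Fin n) *
      exp (-(η ^ 2 * (α * n) / 8)) < 1 := by
    simp only [Fintype.card_prod, Fintype.card_fin, Nat.cast_mul]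
    exact lt_of_le_of_lt (by gcongr) hexp
  have hkη : k * η ≤ ε / 4 := by
    have hkn := card_nsmul_le_sum univ (fun i => (nn i : ℝ)) _ fun i _ => hnn i
    rw [← Nat.cast_sum, hsum, card_univ, Fintype.card_fin, nsmul_eq_mul] at hkn
    have hVn : (#V : ℝ) ≤ n := by exact_mod_cast (card_le_univ V).trans_eq (Fintype.card_fin n)
    have hkα : k * α ≤ 1 := by nlinarith
    calc k * η = k * α * (ε / 4) := by simp only [η]; ring
      _ ≤ ε / 4 := by nlinarith
  obtain ⟨P, ⟨hdisj, hcover⟩, hPs, hPd⟩ :=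
    exists_partition_isDenseFor hη hηL hsmall k nn V (δ + ε)
      (isDenseFor_neighborFinset 𝒢 (by positivity) hV) hnn hsum
  refine ⟨P, hdisj, hcover, hPs, fun i j v => ?_⟩
  rw [degOn_coe_finset, ← hPs i]
  exact le_trans (by gcongr; linarith) (hPd i (j, v))
end

section
/- Let α ∈ (0, 1) and let n, m, ℓ ≥ 1 be integers satisfying ℓ ≤ α⁷m/10⁵ and α²n ≥ 8m. Let H be a bipartite graph with vertex classes A and B such that |A| = m, |B| = n, and every vertex v ∈ A has degree d_H(v) ≥ αn. Then there are disjoint subsets B₀, B₁ ⊆ B with |B₀| = m − ℓ and |B₁| ≥ α⁷n/10⁵ with the following property: for every subset U ⊆ B₁ of size ℓ, the graph H contains a perfect matching between A and B₀ ∪ U. -/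
/-!
Say that `C ⊆ B` has surplus `ℓ` if every nonempty `D ⊆ C` has at least `|D| + ℓ` neighbours.
Let `W` be the set of vertices of `B` of degree at least `8ℓ/α`; double counting gives `|W| > m`.
Take a maximal `C ⊆ W` with surplus `ℓ` and some `w ∈ W \ C`. As `C ∪ {w}` has no surplus `ℓ`,
some `D ∋ w` has too few neighbours; for `Y = N(D)`, the part `C'` of `C` whose neighbourhood lies
in `Y` satisfies `|C'| + ℓ = |Y|`. Then `Y` can be matched into `C' ∪ U` for every `ℓ`-set `U` of
vertices with at least `ℓ` neighbours in `Y`: in Hall's condition, small `s ⊆ Y` see enough of `C'`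
by the surplus, and large `s` see all of `C' ∪ U`. Since `|Y| ≥ 8ℓ/α`, double counting gives at
least `7αn/8` such vertices, and `B₁` is a set of them avoiding `C'`. Finally `B₀` is `C'` together
with a greedy matching of `A \ Y` avoiding `C' ∪ B₁`, which exists as all degrees are at least
`αn ≫ m + |B₁|`.
-/

open Finset Function

theorem sum_le_card_filter_le_mul_add {γ : Type*} [Fintype γ] (f : γ → ℝ) {M θ : ℝ}
    (hM : ∀ x, f x ≤ M) (hθ : 0 ≤ θ) :
    ∑ x, f x ≤ #{x | θ ≤ f x} * M + Fintype.card γ * θ := by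
  rw [← sum_filter_add_sum_filter_not univ (fun x => θ ≤ f x)]
  have hhigh : ∑ x with θ ≤ f x, f x ≤ #{x | θ ≤ f x} * M := by
    simpa using sum_le_card_nsmul _ f M fun x _ => hM x
  have hlow : ∑ x with ¬ θ ≤ f x, f x ≤ #{x | ¬ θ ≤ f x} * θ := by
    simpa using sum_le_card_nsmul _ f θ fun x hx => (not_le.1 (mem_filter.1 hx).2).le
  have hcard : (#{x | ¬ θ ≤ f x} : ℝ) * θ ≤ Fintype.card γ * θ :=
    mul_le_mul_of_nonneg_right (by exact_mod_cast card_le_univ _) hθ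
  linarith

namespace Bipartite

variable {ι β : Type*}

theorem exists_injective_of_forall_card_le_card [DecidableEq β] {κ : Type*} [Fintype κ]
    (t : κ → Finset β) (h : ∀ k, Fintype.card κ ≤ #(t k)) :
    ∃ f : κ → β, Injective f ∧ ∀ k, f k ∈ t k := by
  refine (all_card_le_biUnion_card_iff_exists_injective t).mp fun s => ?_
  obtain rfl | ⟨k, hk⟩ := s.eq_empty_or_nonempty
  · simp
  · calc #s ≤ Fintype.card κ := card_le_univ s
      _ ≤ #(t k) := h k
      _ ≤ #(s.biUnion t) := card_le_card (subset_biUnion_of_mem t hk)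

variable (R : ι → β → Prop) [DecidableRel R]

theorem exists_injective_of_hall [DecidableEq β] (S : Finset ι) (T : Finset β)
    (h : ∀ s ⊆ S, #s ≤ #{b ∈ T | ∃ a ∈ s, R a b}) :
    ∃ f : S → β, Injective f ∧ ∀ a : S, R a (f a) ∧ f a ∈ T := by
  obtain ⟨f, hf, hfT⟩ := (all_card_le_biUnion_card_iff_exists_injective
    fun a : S => {b ∈ T | R a b}).mp fun s => by
      convert h (s.map (Embedding.subtype _)) (by simp +contextual [subset_iff]) using 2
      · simp
      · ext b
        simp only [mem_biUnion, mem_filter, Subtype.exists, exists_and_right, mem_map,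
          Embedding.subtype_apply, exists_eq_right]
        tauto
  exact ⟨f, hf, fun a => by simpa [and_comm] using hfT a⟩

variable {R} in
theorem exists_mem_rel_of_card_lt [DecidableEq ι] {ℓ : ℕ} {s Y : Finset ι} {b : β} (hs : s ⊆ Y)
    (hb : ℓ ≤ #{a ∈ Y | R a b}) (hsY : #Y < #s + ℓ) : ∃ a ∈ s, R a b := by
  by_contra! h
  have hsub : {a ∈ Y | R a b} ⊆ Y \ s := fun a ha => by
    rw [mem_filter] at ha
    exact mem_sdiff.2 ⟨ha.1, fun has => h a has ha.2⟩
  have := card_le_card hsub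
  rw [card_sdiff_of_subset hs] at this
  have := card_le_card hs
  omega

theorem sub_le_card_filter_le_card_filter [Fintype β] (Y : Finset ι) (hY : Y.Nonempty)
    {d c θ : ℝ} (hθ : 0 ≤ θ) (hd : ∀ a ∈ Y, d ≤ #{b | R a b})
    (hθc : θ * Fintype.card β ≤ c * #Y) : d - c ≤ #{b | θ ≤ #{a ∈ Y | R a b}} := by
  have hsum : #Y * d ≤ ∑ b, (#{a ∈ Y | R a b} : ℝ) := calc
    #Y * d = ∑ a ∈ Y, d := by rw [sum_const, nsmul_eq_mul]
    _ ≤ ∑ a ∈ Y, (#{b | R a b} : ℝ) := sum_le_sum hd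
    _ = ∑ b, (#{a ∈ Y | R a b} : ℝ) := by
      exact_mod_cast sum_card_bipartiteAbove_eq_sum_card_bipartiteBelow R
  have hmarkov := sum_le_card_filter_le_mul_add (fun b => (#{a ∈ Y | R a b} : ℝ)) (M := #Y)
    (fun b => by exact_mod_cast card_filter_le Y (R · b)) hθ
  have hYpos : (0 : ℝ) < #Y := by exact_mod_cast hY.card_pos
  refine le_of_mul_le_mul_left ?_ hYpos
  nlinarith

variable [Fintype ι]

def nbhd (D : Finset β) : Finset ι := {a | ∃ c ∈ D, R a c}

def HasSurplus (ℓ : ℕ) (C : Finset β) : Prop :=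
  ∀ D ⊆ C, D.Nonempty → #D + ℓ ≤ #(nbhd R D)

structure IsAbsorber (ℓ : ℕ) (Y : Finset ι) (C : Finset β) : Prop where
  hasSurplus : HasSurplus R ℓ C
  nbhd_subset : nbhd R C ⊆ Y
  card_add : #C + ℓ = #Y

variable {R}

@[simp]
theorem mem_nbhd {D : Finset β} {a : ι} : a ∈ nbhd R D ↔ ∃ c ∈ D, R a c := by
  simp [nbhd]

theorem nbhd_mono {D D' : Finset β} (h : D ⊆ D') : nbhd R D ⊆ nbhd R D' := fun a ha => by
  obtain ⟨c, hc, hac⟩ := mem_nbhd.1 ha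
  exact mem_nbhd.2 ⟨c, h hc, hac⟩

theorem HasSurplus.mono {ℓ : ℕ} {C C' : Finset β} (h : HasSurplus R ℓ C) (hC : C' ⊆ C) :
    HasSurplus R ℓ C' :=
  fun D hD => h D (hD.trans hC)

theorem HasSurplus.card_le {ℓ : ℕ} {C : Finset β} (h : HasSurplus R ℓ C) :
    #C ≤ Fintype.card ι := by
  obtain rfl | hC := C.eq_empty_or_nonempty
  · simp
  · have := h C Subset.rfl hC
    have := card_le_univ (nbhd R C)
    omega

variable {ℓ : ℕ} {Y : Finset ι} {C : Finset β}

theorem IsAbsorber.le_card_filter (hA : IsAbsorber R ℓ Y C) {c : β} (hc : c ∈ C) :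
    ℓ ≤ #{a ∈ Y | R a c} := by
  have h := hA.hasSurplus {c} (singleton_subset_iff.2 hc) (singleton_nonempty c)
  have hsub : nbhd R {c} ⊆ {a ∈ Y | R a c} := fun a ha => by
    obtain ⟨c', hc', hac⟩ := mem_nbhd.1 ha
    rw [mem_singleton] at hc'
    subst hc'
    exact mem_filter.2 ⟨hA.nbhd_subset (nbhd_mono (singleton_subset_iff.2 hc) ha), hac⟩
  have := card_le_card hsub
  rw [card_singleton] at h
  omega

variable [DecidableEq ι]

theorem IsAbsorber.card_le_card_filter (hA : IsAbsorber R ℓ Y C) {s : Finset ι} (hs : s ⊆ Y)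
    (hsY : #s + ℓ ≤ #Y) : #s ≤ #{c ∈ C | ∃ a ∈ s, R a c} := by
  have hsplit := card_filter_add_card_filter_not (s := C) (fun c => ∃ a ∈ s, R a c)
  obtain hD | hD := (C.filter fun c => ¬ ∃ a ∈ s, R a c).eq_empty_or_nonempty
  · rw [hD, card_empty] at hsplit
    have := hA.card_add
    omega
  · have hND : nbhd R (C.filter fun c => ¬ ∃ a ∈ s, R a c) ⊆ Y \ s := fun a ha => by
      obtain ⟨c, hc, hac⟩ := mem_nbhd.1 ha
      rw [mem_filter] at hc
      exact mem_sdiff.2 ⟨hA.nbhd_subset (mem_nbhd.2 ⟨c, hc.1, hac⟩), fun has => hc.2 ⟨a, has, hac⟩⟩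
    have := hA.hasSurplus _ (filter_subset _ _) hD
    have := card_le_card hND
    rw [card_sdiff_of_subset hs] at this
    have := hA.card_add
    omega

theorem IsAbsorber.exists_matching [DecidableEq β] (hA : IsAbsorber R ℓ Y C) {U : Finset β}
    (hCU : Disjoint C U) (hU : #U = ℓ) (hUY : ∀ u ∈ U, ℓ ≤ #{a ∈ Y | R a u}) :
    ∃ f : Y → β, Injective f ∧ ∀ a : Y, R a (f a) ∧ f a ∈ C ∪ U := by
  refine exists_injective_of_hall R Y (C ∪ U) fun s hs => ?_
  by_cases hsY : #s + ℓ ≤ #Y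
  · exact (hA.card_le_card_filter hs hsY).trans
      (card_le_card (filter_subset_filter _ subset_union_left))
  · have hall : {b ∈ C ∪ U | ∃ a ∈ s, R a b} = C ∪ U := filter_true_of_mem fun b hb =>
      exists_mem_rel_of_card_lt hs ((mem_union.1 hb).elim hA.le_card_filter (hUY b)) (by omega)
    rw [hall, card_union_of_disjoint hCU, hU, hA.card_add]
    exact card_le_card hs

theorem HasSurplus.exists_isAbsorber [DecidableEq β] (hC : HasSurplus R ℓ C) {w : β}
    (hw : ℓ < #{a | R a w}) (hins : ¬ HasSurplus R ℓ (insert w C)) :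
    ∃ Y, IsAbsorber R ℓ Y {c ∈ C | ∀ a, R a c → a ∈ Y} ∧ ∀ a, R a w → a ∈ Y := by
  simp only [HasSurplus, not_forall, not_le] at hins
  obtain ⟨D, hDC, hD, hlt⟩ := hins
  have hwD : w ∈ D := by
    by_contra hwD
    exact (hC D ((subset_insert_iff_of_notMem hwD).1 hDC) hD).not_gt hlt
  set C' := {c ∈ C | ∀ a, R a c → a ∈ nbhd R D}
  have hNC' : nbhd R C' ⊆ nbhd R D := fun a ha => by
    obtain ⟨c, hc, hac⟩ := mem_nbhd.1 ha
    exact (mem_filter.1 hc).2 a hac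
  have hwN : ∀ a, R a w → a ∈ nbhd R D := fun a hac => mem_nbhd.2 ⟨w, hwD, hac⟩
  have hDC' : D.erase w ⊆ C' := fun c hc => by
    obtain ⟨hcw, hcD⟩ := mem_erase.1 hc
    exact mem_filter.2 ⟨(mem_insert.1 (hDC hcD)).resolve_left hcw,
      fun a hac => mem_nbhd.2 ⟨c, hcD, hac⟩⟩
  have hcardD := card_erase_add_one hwD
  have hcardC' := card_le_card hDC'
  refine ⟨nbhd R D, ⟨hC.mono (filter_subset _ _), hNC', ?_⟩, hwN⟩
  change #C' + ℓ = _
  obtain hC'e | hC'ne := C'.eq_empty_or_nonempty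
  · have hwsub : ({a | R a w} : Finset ι) ⊆ nbhd R D := fun a ha => hwN a (mem_filter.1 ha).2
    have := card_le_card hwsub
    rw [hC'e, card_empty] at hcardC'
    omega
  · have := hC.mono (filter_subset _ _) C' Subset.rfl hC'ne
    have := card_le_card hNC'
    omega

theorem exists_isAbsorber [DecidableEq β] (W : Finset β) (hW : Fintype.card ι < #W)
    (hdeg : ∀ w ∈ W, ℓ < #{a | R a w}) :
    ∃ Y C, IsAbsorber R ℓ Y C ∧ ∃ w ∈ W, ∀ a, R a w → a ∈ Y := by
  classical
  obtain ⟨C, hCmem, hmax⟩ := exists_max_image ({C ∈ W.powerset | HasSurplus R ℓ C}) card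
    ⟨∅, mem_filter.2 ⟨empty_mem_powerset W, fun D hD hne => by
      simp [subset_empty.1 hD] at hne⟩⟩
  obtain ⟨hCW, hC⟩ := mem_filter.1 hCmem
  obtain ⟨w, hwW, hwC⟩ : ∃ w ∈ W, w ∉ C := by
    by_contra! h
    have := card_le_card h
    have := hC.card_le
    omega
  have hins : ¬ HasSurplus R ℓ (insert w C) := fun h => by
    have := hmax _ (mem_filter.2 ⟨mem_powerset.2 (insert_subset hwW (mem_powerset.1 hCW)), h⟩)
    rw [card_insert_of_notMem hwC] at this
    omega
  obtain ⟨Y, hA, hwY⟩ := hC.exists_isAbsorber (hdeg w hwW) hins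
  exact ⟨Y, _, hA, w, hwW, hwY⟩

theorem IsAbsorber.exists_absorbing_sets [Fintype β] [DecidableEq β] (hA : IsAbsorber R ℓ Y C)
    {B₁ : Finset β} (hCB₁ : Disjoint C B₁) (hB₁ : ∀ b ∈ B₁, ℓ ≤ #{a ∈ Y | R a b})
    (hfree : ∀ a ∉ Y, Fintype.card ι ≤ #{b | R a b ∧ b ∉ C ∪ B₁}) :
    ∃ B₀ : Finset β, Disjoint B₀ B₁ ∧ #B₀ = Fintype.card ι - ℓ ∧
      ∀ U ⊆ B₁, #U = ℓ → ∃ f : ι → β, Injective f ∧ (∀ a, R a (f a)) ∧ ∀ a, f a ∈ B₀ ∪ U := by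
  obtain ⟨g, hg, hgmem⟩ := exists_injective_of_forall_card_le_card
    (fun a : {a // a ∉ Y} => {b | R a b ∧ b ∉ C ∪ B₁})
    fun a => Fintype.card_subtype_le _ |>.trans (hfree a a.2)
  have hgR : ∀ a : {a // a ∉ Y}, R a (g a) := fun a => (mem_filter.1 (hgmem a)).2.1
  have hgCB₁ : ∀ a, g a ∉ C ∪ B₁ := fun a => (mem_filter.1 (hgmem a)).2.2
  have himg : Disjoint (univ.image g) (C ∪ B₁) := disjoint_left.2 fun b hb => by
    obtain ⟨a, -, rfl⟩ := mem_image.1 hb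
    exact hgCB₁ a
  refine ⟨univ.image g ∪ C, disjoint_union_left.2 ⟨himg.mono_right subset_union_right, hCB₁⟩,
    ?_, fun U hU hUcard => ?_⟩
  · rw [card_union_of_disjoint (himg.mono_right subset_union_left),
      card_image_of_injective _ hg, card_univ, Fintype.card_subtype_compl, Fintype.card_coe]
    have := hA.card_add
    have := card_le_univ Y
    omega
  obtain ⟨f, hf, hfR⟩ := hA.exists_matching (hCB₁.mono_right hU) hUcard fun u hu => hB₁ u (hU hu)
  refine ⟨fun a => if h : a ∈ Y then f ⟨a, h⟩ else g ⟨a, h⟩, hf.dite _ hg ?_, fun a => ?_,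
    fun a => ?_⟩
  · intro x x' hx hx' hxx'
    exact hgCB₁ _ (hxx' ▸ union_subset_union_right hU (hfR ⟨x, hx⟩).2)
  · dsimp only
    split_ifs with h
    exacts [(hfR ⟨a, h⟩).1, hgR ⟨a, h⟩]
  · dsimp only
    split_ifs with h
    · exact union_subset_union_left subset_union_right (hfR _).2
    · exact mem_union_left _ (mem_union_left _ (mem_image_of_mem g (mem_univ _)))

theorem exists_isAbsorber_of_minDegree [Fintype β] [DecidableEq β] {α : ℝ} (hα : 0 < α)
    (hα₁ : α ≤ 1) (hℓ : 0 < ℓ) (hℓm : 16 * ℓ ≤ α ^ 2 * Fintype.card ι)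
    (hmn : 2 * Fintype.card ι < α * Fintype.card β)
    (hdeg : ∀ a, α * Fintype.card β ≤ #{b | R a b}) :
    ∃ Y C, IsAbsorber R ℓ Y C ∧ 8 * ℓ ≤ α * #Y := by
  have hℓR : (0 : ℝ) < ℓ := by exact_mod_cast hℓ
  have : Nonempty ι := Fintype.card_pos_iff.1 <| Nat.pos_of_ne_zero fun h => by
    rw [h, Nat.cast_zero, mul_zero] at hℓm
    linarith
  have hθ : (ℓ : ℝ) < 8 * ℓ / α := by
    rw [lt_div_iff₀ hα]
    nlinarith
  have hW := sub_le_card_filter_le_card_filter R univ univ_nonempty (θ := 8 * ℓ / α)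
    (c := α * Fintype.card β / 2) (by positivity) (fun a _ => hdeg a) (by
      rw [card_univ, div_mul_eq_mul_div, div_le_iff₀ hα]
      nlinarith)
  set W : Finset β := {b | 8 * (ℓ : ℝ) / α ≤ #{a ∈ univ | R a b}}
  have hWι : Fintype.card ι < #W := by
    exact_mod_cast (by linarith : (Fintype.card ι : ℝ) < #W)
  obtain ⟨Y, C, hA, w, hwW, hwY⟩ := exists_isAbsorber _ hWι
    fun w hw => by exact_mod_cast hθ.trans_le (mem_filter.1 hw).2
  have hwY : (#{a | R a w} : ℝ) ≤ #Y := by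
    exact_mod_cast card_le_card fun a ha => hwY a (mem_filter.1 ha).2
  refine ⟨Y, C, hA, ?_⟩
  have := (mem_filter.1 hwW).2
  rw [div_le_iff₀ hα] at this
  nlinarith

theorem IsAbsorber.exists_absorbing_sets_of_minDegree [Fintype β] [DecidableEq β]
    (hA : IsAbsorber R ℓ Y C) (hℓ : 0 < ℓ) {α : ℝ} (hY : 8 * ℓ ≤ α * #Y)
    (hmn : 8 * Fintype.card ι ≤ α * Fintype.card β)
    (hdeg : ∀ a, α * Fintype.card β ≤ #{b | R a b}) {t : ℕ} (ht : t ≤ α * Fintype.card β / 4) :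
    ∃ B₀ B₁ : Finset β, Disjoint B₀ B₁ ∧ #B₀ = Fintype.card ι - ℓ ∧ #B₁ = t ∧
      ∀ U ⊆ B₁, #U = ℓ → ∃ f : ι → β, Injective f ∧ (∀ a, R a (f a)) ∧ ∀ a, f a ∈ B₀ ∪ U := by
  have hYne : Y.Nonempty := card_pos.1 (by have := hA.card_add; omega)
  have hZ := sub_le_card_filter_le_card_filter R Y hYne (θ := ℓ) (c := α * Fintype.card β / 8)
    (by positivity) (fun a _ => hdeg a) (by nlinarith)
  set Z : Finset β := {b | (ℓ : ℝ) ≤ #{a ∈ Y | R a b}}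
  have hCm : (#C : ℝ) ≤ Fintype.card ι := by exact_mod_cast hA.hasSurplus.card_le
  have htZ : t ≤ #(Z \ C) := by
    have := le_card_sdiff C Z
    have : t + #C ≤ #Z := by exact_mod_cast (by linarith : (t : ℝ) + #C ≤ #Z)
    omega
  obtain ⟨B₁, hB₁, rfl⟩ := exists_subset_card_eq htZ
  have hfree : ∀ a ∉ Y, Fintype.card ι ≤ #{b | R a b ∧ b ∉ C ∪ B₁} := fun a _ => by
    set F : Finset β := {b | R a b ∧ b ∉ C ∪ B₁}
    have hsub : ({b | R a b} : Finset β) ⊆ F ∪ (C ∪ B₁) := fun b hb => by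
      by_cases h : b ∈ C ∪ B₁
      · exact mem_union_right _ h
      · exact mem_union_left _ (mem_filter.2 ⟨mem_univ b, (mem_filter.1 hb).2, h⟩)
    have := card_le_card hsub
    have := card_union_le F (C ∪ B₁)
    have := card_union_le C B₁
    have : (#{b | R a b} : ℝ) ≤ #F + #C + #B₁ := by
      exact_mod_cast (by omega : #{b | R a b} ≤ #F + #C + #B₁)
    exact_mod_cast (by linarith [hdeg a] : (Fintype.card ι : ℝ) ≤ #F)
  obtain ⟨B₀, hB₀B₁, hB₀, hmatch⟩ := hA.exists_absorbing_sets
    (disjoint_left.2 fun b hbC hbB₁ => (mem_sdiff.1 (hB₁ hbB₁)).2 hbC)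
    (fun b hb => by exact_mod_cast (mem_filter.1 (mem_sdiff.1 (hB₁ hb)).1).2) hfree
  exact ⟨B₀, B₁, hB₀B₁, hB₀, rfl, hmatch⟩

end Bipartite

open Bipartite in
theorem colour_absorption_general (α : ℝ) (hα₀ : 0 < α) (hα₁ : α < 1) (n m ℓ : ℕ)
    (hm : 1 ≤ m) (hℓ : 1 ≤ ℓ)
    (hℓm : (ℓ : ℝ) ≤ α ^ 7 * m / 10 ^ 5) (hnm : 8 * (m : ℝ) ≤ α ^ 2 * n)
    (R : Fin m → Fin n → Prop)
    (hdeg : ∀ a : Fin m, α * n ≤ ({b : Fin n | R a b}.ncard : ℝ)) :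
    ∃ B₀ B₁ : Finset (Fin n), Disjoint B₀ B₁ ∧ B₀.card = m - ℓ ∧
      α ^ 7 * n / 10 ^ 5 ≤ (B₁.card : ℝ) ∧
      ∀ U : Finset (Fin n), U ⊆ B₁ → U.card = ℓ →
        ∃ f : Fin m → Fin n, Function.Injective f ∧
          (∀ a, R a (f a)) ∧ (∀ a, f a ∈ B₀ ∪ U) := by
  classical
  have hdeg' : ∀ a, α * Fintype.card (Fin n) ≤ #{b | R a b} := fun a => by
    simpa [← Set.ncard_coe_finset] using hdeg a
  have hℓR : (1 : ℝ) ≤ ℓ := by exact_mod_cast hℓ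
  have hα5 : α ^ 5 ≤ 1 := pow_le_one₀ hα₀.le hα₁.le
  have hα7m : α ^ 7 * m ≤ α ^ 2 * m := by
    nlinarith [mul_le_mul_of_nonneg_right hα5 (by positivity : 0 ≤ α ^ 2 * m)]
  have hmR : (1 : ℝ) ≤ m := by exact_mod_cast hm
  have hmn : 8 * (m : ℝ) ≤ α * n := by nlinarith
  obtain ⟨Y, C, hA, hY⟩ := exists_isAbsorber_of_minDegree (R := R) hα₀ hα₁.le hℓ
    (by rw [Fintype.card_fin]; nlinarith) (by rw [Fintype.card_fin, Fintype.card_fin]; nlinarith)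
    hdeg'
  obtain ⟨B₀, B₁, hB₀B₁, hB₀, hB₁, hmatch⟩ := hA.exists_absorbing_sets_of_minDegree hℓ hY
    (by simpa using hmn) hdeg' (t := ⌈α ^ 7 * n / 10 ^ 5⌉₊) (by
      have := Nat.ceil_lt_add_one (by positivity : 0 ≤ α ^ 7 * n / 10 ^ 5)
      rw [Fintype.card_fin]
      nlinarith)
  exact ⟨B₀, B₁, hB₀B₁, by simpa using hB₀, hB₁ ▸ Nat.le_ceil _, hmatch⟩

/-- Let `α ∈ (0, 1)` and `n, m, ℓ ≥ 1` with `ℓ ≤ α⁷m/10⁵` and `α²n ≥ 8m`. Let `H` be a bipartite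
graph with classes `A` (of size `m`) and `B` (of size `n`), given by the relation `R`, in which
every vertex of `A` has degree at least `αn`. Then there are disjoint `B₀, B₁ ⊆ B` with
`|B₀| = m - ℓ` and `|B₁| ≥ α⁷n/10⁵` such that for every `U ⊆ B₁` of size `ℓ` there is a perfect
matching between `A` and `B₀ ∪ U`. -/
theorem colour_absorption (α : ℝ) (hα₀ : 0 < α) (hα₁ : α < 1) (n m ℓ : ℕ)
    (hn : 1 ≤ n) (hm : 1 ≤ m) (hℓ : 1 ≤ ℓ)
    (hℓm : (ℓ : ℝ) ≤ α ^ 7 * m / 10 ^ 5) (hnm : 8 * (m : ℝ) ≤ α ^ 2 * n)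
    (R : Fin m → Fin n → Prop)
    (hdeg : ∀ a : Fin m, α * n ≤ ({b : Fin n | R a b}.ncard : ℝ)) :
    ∃ B₀ B₁ : Finset (Fin n), Disjoint B₀ B₁ ∧ B₀.card = m - ℓ ∧
      α ^ 7 * n / 10 ^ 5 ≤ (B₁.card : ℝ) ∧
      ∀ U : Finset (Fin n), U ⊆ B₁ → U.card = ℓ →
        ∃ f : Fin m → Fin n, Function.Injective f ∧
          (∀ a, R a (f a)) ∧ (∀ a, f a ∈ B₀ ∪ U) :=
  colour_absorption_general α hα₀ hα₁ n m ℓ hm hℓ hℓm hnm R hdeg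
end

section
/- Let n, m ∈ ℕ satisfy 1 ≤ m ≤ n/3. For every tree T on n vertices and every vertex t ∈ V(T), there are two edge-disjoint subtrees T₁, T₂ ⊆ T such that E(T₁) ∪ E(T₂) = E(T), t ∈ V(T₁), and m ≤ |V(T₂)| ≤ 3m. -/
/-!
Call `S` pendant at `v` if it induces a connected subgraph and every edge leaving `S` leaves it
at `v`. In a tree, a pendant set `S` with a vertex other than `v` splits into the branch `C` of
`S \ {v}` at a neighbour `c` of `v` and the rest `S \ C`: acyclicity makes `c` the only vertex of
`C` adjacent to `v`, so `C` is pendant at `c` and `S \ C` at `v`. Starting from the whole tree,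
pendant at `t`, and passing to a part with at least `m` vertices while the size exceeds `2m`, one
reaches `S` pendant at `v` with `m ≤ |S| ≤ 2m` and `t ∉ S \ {v}`. Take `T₂` induced on `S` and
`T₁` induced on the complement of `S \ {v}`.
-/

open SimpleGraph

namespace SimpleGraph

variable {V : Type*} {G : SimpleGraph V}

theorem exists_walk_of_connected_induce {s : Set V} (hs : (G.induce s).Connected) {x y : V}
    (hx : x ∈ s) (hy : y ∈ s) : ∃ p : G.Walk x y, ∀ z ∈ p.support, z ∈ s := by
  obtain ⟨p, hp⟩ := (Subgraph.preconnected_iff_forall_exists_walk_subgraph _).mp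
    (preconnected_induce_iff.mp hs.preconnected) hx hy
  exact ⟨p, fun z hz => Subgraph.verts_mono hp ((Walk.mem_verts_toSubgraph p).mpr hz)⟩

theorem connected_induce_of_forall_exists_walk {s : Set V} {v : V} (hv : v ∈ s)
    (h : ∀ x ∈ s, ∃ p : G.Walk v x, ∀ z ∈ p.support, z ∈ s) : (G.induce s).Connected :=
  G.induce_connected_of_patches v hv fun hx => by
    obtain ⟨p, hp⟩ := h _ hx
    exact ⟨_, hp, p.start_mem_support, p.end_mem_support,
      p.connected_induce_support.preconnected _ _⟩

theorem IsAcyclic.eq_of_adj_of_walk (hG : G.IsAcyclic) {v a c : V} (hva : G.Adj v a)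
    (hvc : G.Adj v c) (p : G.Walk c a) (hv : v ∉ p.support) : a = c := by
  have := isBridge_iff_forall_walk_mem_edges.mp (isAcyclic_iff_forall_adj_isBridge.mp hG hva)
    (.cons hvc p)
  rw [Walk.edges_cons, List.mem_cons, Sym2.congr_right] at this
  exact this.resolve_right fun h => hv (p.fst_mem_support_of_mem_edges h)

theorem exists_walk_avoiding {R D : Set V} {x v : V} (p : G.Walk x v)
    (hD : ∀ a b, G.Adj a b → a ∉ D → b ∈ D → a = v) (hx : x ∉ D)
    (hp : ∀ z ∈ p.support, z ∈ R) :
    ∃ q : G.Walk x v, ∀ z ∈ q.support, z ∈ R \ D := by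
  induction p with
  | nil => exact ⟨.nil, by simpa using ⟨hp _ (List.mem_singleton_self _), hx⟩⟩
  | @cons a b w hab p ih =>
    by_cases hb : b ∈ D
    · obtain rfl := hD a b hab hx hb
      exact ⟨.nil, by simpa using ⟨hp _ (List.mem_cons_self ..), hx⟩⟩
    · obtain ⟨q, hq⟩ := ih hD hb fun z hz => hp z (List.mem_cons_of_mem _ hz)
      refine ⟨.cons hab q, fun z hz => ?_⟩
      rcases List.mem_cons.mp hz with rfl | hz
      · exact ⟨hp _ (List.mem_cons_self ..), hx⟩
      · exact hq z hz

theorem connected_induce_diff {R D : Set V} {v : V} (hR : (G.induce R).Connected) (hvR : v ∈ R)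
    (hvD : v ∉ D) (hD : ∀ a b, G.Adj a b → a ∉ D → b ∈ D → a = v) :
    (G.induce (R \ D)).Connected := by
  refine connected_induce_of_forall_exists_walk ⟨hvR, hvD⟩ fun x hx => ?_
  obtain ⟨p, hp⟩ := exists_walk_of_connected_induce hR hx.1 hvR
  obtain ⟨q, hq⟩ := exists_walk_avoiding p hD hx.2 hp
  exact ⟨q.reverse, fun z hz => hq z (by simpa using hz)⟩

variable {S : Set V} {v : V}

structure IsPendant (G : SimpleGraph V) (S : Set V) (v : V) : Prop where
  mem : v ∈ S
  connected : (G.induce S).Connected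
  eq_of_adj : ∀ a b, G.Adj a b → a ∉ S → b ∈ S → b = v

theorem isPendant_univ (hG : G.Connected) (v : V) : G.IsPendant Set.univ v where
  mem := Set.mem_univ v
  connected := (induceUnivIso G).connected_iff.mpr hG
  eq_of_adj _ _ _ ha := (ha (Set.mem_univ _)).elim

theorem IsPendant.exists_adj (hS : G.IsPendant S v) {u : V} (hu : u ∈ S) (huv : u ≠ v) :
    ∃ c, G.Adj v c ∧ c ∈ S := by
  obtain ⟨p, hp⟩ := exists_walk_of_connected_induce hS.connected hS.mem hu
  cases p with
  | nil => exact absurd rfl huv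
  | cons h q => exact ⟨_, h, hp _ (List.mem_cons_of_mem _ q.start_mem_support)⟩

def reachSetWithin (G : SimpleGraph V) (A : Set V) (c : V) : Set V :=
  {x | ∃ p : G.Walk c x, ∀ z ∈ p.support, z ∈ A}

section reachSetWithin

variable {A : Set V} {c : V}

theorem reachSetWithin_subset : G.reachSetWithin A c ⊆ A :=
  fun _ ⟨p, hp⟩ => hp _ p.end_mem_support

theorem self_mem_reachSetWithin (hc : c ∈ A) : c ∈ G.reachSetWithin A c :=
  ⟨.nil, by simpa using hc⟩

theorem mem_reachSetWithin_of_adj {x y : V} (hx : x ∈ G.reachSetWithin A c) (hxy : G.Adj x y)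
    (hy : y ∈ A) : y ∈ G.reachSetWithin A c := by
  obtain ⟨p, hp⟩ := hx
  refine ⟨p.concat hxy, fun z hz => ?_⟩
  rw [Walk.support_concat, List.mem_append, List.mem_singleton] at hz
  exact hz.elim (hp z) (· ▸ hy)

theorem connected_induce_reachSetWithin (hc : c ∈ A) :
    (G.induce (G.reachSetWithin A c)).Connected := by
  classical
  refine connected_induce_of_forall_exists_walk (self_mem_reachSetWithin hc)
    fun x ⟨p, hp⟩ => ⟨p, fun z hz => ?_⟩
  exact ⟨p.takeUntil z hz, fun w hw => hp w (p.support_takeUntil_subset_support hz hw)⟩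

end reachSetWithin

theorem IsPendant.exists_split (hG : G.IsAcyclic) (hS : G.IsPendant S v) {u : V} (hu : u ∈ S)
    (huv : u ≠ v) :
    ∃ C c, C.Nonempty ∧ C ⊆ S \ {v} ∧ G.IsPendant C c ∧ G.IsPendant (S \ C) v := by
  obtain ⟨c, hvc, hcS⟩ := hS.exists_adj hu huv
  have hc : c ∈ S \ {v} := ⟨hcS, hvc.ne'⟩
  set C := G.reachSetWithin (S \ {v}) c
  have hCS : C ⊆ S \ {v} := reachSetWithin_subset
  have hcC : c ∈ C := self_mem_reachSetWithin hc
  have hvC : v ∉ C := fun h => (hCS h).2 rfl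
  have hin : ∀ a b, G.Adj a b → a ∉ C → b ∈ C → a = v := by
    intro a b hab ha hb
    by_contra hav
    have haS : a ∈ S := by
      by_contra haS
      exact (hCS hb).2 (hS.eq_of_adj a b hab haS (hCS hb).1)
    exact ha (mem_reachSetWithin_of_adj hb hab.symm ⟨haS, hav⟩)
  refine ⟨C, c, ⟨c, hcC⟩, hCS, ⟨hcC, connected_induce_reachSetWithin hc, ?_⟩,
    ⟨⟨hS.mem, hvC⟩, connected_induce_diff hS.connected hS.mem hvC hin, ?_⟩⟩
  · intro a b hab ha hb
    obtain rfl := hin a b hab ha hb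
    obtain ⟨p, hp⟩ := hb
    exact hG.eq_of_adj_of_walk hab hvc p fun h => (hp _ h).2 rfl
  · intro a b hab ha hb
    by_cases haS : a ∈ S
    · exact hin b a hab.symm hb.2 (not_not.mp fun h => ha ⟨haS, h⟩)
    · exact hS.eq_of_adj a b hab haS hb.1

theorem IsPendant.exists_ncard_le_two_mul [Finite V] (hG : G.IsAcyclic) {m : ℕ} (hm : 1 ≤ m)
    {t : V} (hS : G.IsPendant S v) (ht : t ∉ S \ {v}) (hmS : m ≤ S.ncard) :
    ∃ S' v', G.IsPendant S' v' ∧ t ∉ S' \ {v'} ∧ m ≤ S'.ncard ∧ S'.ncard ≤ 2 * m := by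
  induction hk : S.ncard using Nat.strong_induction_on generalizing S v with
  | _ k ih =>
  by_cases hk2 : k ≤ 2 * m
  · exact ⟨S, v, hS, ht, hmS, hk ▸ hk2⟩
  obtain ⟨u, hu, huv⟩ := Set.exists_ne_of_one_lt_ncard (s := S) (by omega) v
  obtain ⟨C, c, hCne, hCS, hC, hSC⟩ := hS.exists_split hG hu huv
  have hsum : (S \ C).ncard + C.ncard = k :=
    hk ▸ Set.ncard_sdiff_add_ncard_of_subset (hCS.trans Set.sdiff_subset)
  have hCpos : 0 < C.ncard := (Set.ncard_pos).mpr hCne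
  have hSCpos : 0 < (S \ C).ncard := (Set.ncard_pos).mpr ⟨v, hSC.mem⟩
  by_cases hmC : m ≤ C.ncard
  · exact ih _ (by omega) hC (fun h => ht ⟨(hCS h.1).1, (hCS h.1).2⟩) hmC rfl
  · exact ih _ (by omega) hSC (fun h => ht ⟨h.1.1, h.2⟩) (by omega) rfl

theorem Subgraph.disjoint_edgeSet_induce_top {s t : Set V} (h : (s ∩ t).Subsingleton) :
    Disjoint ((⊤ : G.Subgraph).induce s).edgeSet ((⊤ : G.Subgraph).induce t).edgeSet := by
  rw [Set.disjoint_left]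
  intro e
  induction e using Sym2.ind with | h a b => ?_
  rintro ⟨has, hbs, hab⟩ ⟨hat, hbt, -⟩
  exact hab.ne (h ⟨has, hat⟩ ⟨hbs, hbt⟩)

theorem IsPendant.edgeSet_induce_top_union (hS : G.IsPendant S v) :
    ((⊤ : G.Subgraph).induce (S \ {v})ᶜ).edgeSet ∪ ((⊤ : G.Subgraph).induce S).edgeSet =
      G.edgeSet := by
  ext e
  induction e using Sym2.ind with | h a b => ?_
  simp only [Set.mem_union, Subgraph.mem_edgeSet, Subgraph.induce_adj, Subgraph.top_adj,
    mem_edgeSet]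
  refine ⟨fun h => h.elim (·.2.2) (·.2.2), fun hab => ?_⟩
  by_cases h : a ∈ S ∧ b ∈ S
  · exact .inr ⟨h.1, h.2, hab⟩
  · exact .inl ⟨fun ha => ha.2 (hS.eq_of_adj b a hab.symm (fun hb => h ⟨ha.1, hb⟩) ha.1),
      fun hb => hb.2 (hS.eq_of_adj a b hab (fun ha => h ⟨ha, hb.1⟩) hb.1), hab⟩

theorem IsPendant.connected_induce_compl_diff_singleton (hG : G.Connected)
    (hS : G.IsPendant S v) :
    (G.induce (S \ {v})ᶜ).Connected := by
  rw [Set.compl_eq_univ_sdiff]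
  refine connected_induce_diff ((induceUnivIso G).connected_iff.mpr hG) (Set.mem_univ v)
    (fun h => h.2 rfl) fun a b hab ha hb => by_contra fun hav => hb.2 ?_
  exact hS.eq_of_adj a b hab (fun haS => ha ⟨haS, hav⟩) hb.1

end SimpleGraph

/-- Let `1 ≤ m ≤ n/3`. Every `n`-vertex tree `T` with a vertex `t` admits two edge-disjoint
subtrees `T₁, T₂ ⊆ T` with `E(T₁) ∪ E(T₂) = E(T)`, `t ∈ V(T₁)` and `m ≤ |V(T₂)| ≤ 3m`. -/
theorem tree_split_off_piece (n m : ℕ) (hm₁ : 1 ≤ m) (hm₂ : (m : ℝ) ≤ n / 3)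
    (T : SimpleGraph (Fin n)) (hT : T.IsTree) (t : Fin n) :
    ∃ T₁ T₂ : T.Subgraph, T₁.Connected ∧ T₂.Connected ∧
      Disjoint T₁.edgeSet T₂.edgeSet ∧
      T₁.edgeSet ∪ T₂.edgeSet = T.edgeSet ∧
      t ∈ T₁.verts ∧
      m ≤ T₂.verts.ncard ∧ T₂.verts.ncard ≤ 3 * m := by
  have hmn : m ≤ n := by
    have : (m : ℝ) ≤ n := by linarith [(n.cast_nonneg : (0 : ℝ) ≤ n)]
    exact_mod_cast this
  obtain ⟨S, v, hS, ht, hmS, hS2m⟩ :=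
    (isPendant_univ hT.connected t).exists_ncard_le_two_mul hT.isAcyclic hm₁ (t := t) (by simp)
      (by simpa [Set.ncard_univ] using hmn)
  refine ⟨(⊤ : T.Subgraph).induce (S \ {v})ᶜ, (⊤ : T.Subgraph).induce S,
    connected_induce_iff.mp (hS.connected_induce_compl_diff_singleton hT.connected),
    connected_induce_iff.mp hS.connected, Subgraph.disjoint_edgeSet_induce_top ?_,
    hS.edgeSet_induce_top_union, ht, hmS, by simp only [Subgraph.induce_verts]; omega⟩
  exact Set.subsingleton_of_subset_singleton fun x hx => not_not.mp fun hxv => hx.1 ⟨hx.2, hxv⟩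
end

section
/- Let n, m₁, m₃, m₄ ∈ ℕ satisfy 1 ≤ m₁, m₃, m₄ ≤ n/10. For every tree T on n vertices there exist four edge-disjoint subtrees T₁, T₂, T₃, T₄ of T such that E(T) = E(T₁) ∪ E(T₂) ∪ E(T₃) ∪ E(T₄), m_i ≤ |V(T_i)| ≤ 3m_i for each i ∈ {1, 3, 4}, and both T₁ ∪ T₂ and T₁ ∪ T₂ ∪ T₃ are connected trees. -/
/-
In a tree, a connected vertex set `B` with at least `m ≥ 1` vertices contains a branch `A` hanging
at some vertex `x` (connected, containing `x`, joined to the rest of `B` only through `x`, with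
`(B \ A) ∪ {x}` still connected) of size between `m` and `2m`, and it can be chosen so that the
rest still contains any prescribed vertex `p`. To find it, delete `p`: if some component `C` of
`B - p` has at least `m` vertices, recurse into `C` rooted at the neighbour of `p` in `C`, which is
unique because the graph is acyclic; otherwise discard `C` and recurse into `B \ C`.

Peeling off a branch with between `m₄` and `2m₄` vertices from `T`, then one for `m₃` from the
remainder, then one for `m₁` from the next remainder gives `T₄`, `T₃`, `T₁`, and the last remainder
is `T₂`. Each step removes fewer than `2mᵢ` vertices, so `mᵢ ≤ n / 10` keeps the remainders large
enough.
-/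

namespace SimpleGraph

variable {V : Type*} {G : SimpleGraph V} {S S' : Set V} {u v w z : V}

variable (G) in
def ReachIn (S : Set V) (u v : V) : Prop := ∃ p : G.Walk u v, ∀ x ∈ p.support, x ∈ S

namespace ReachIn

lemma refl (hu : u ∈ S) : G.ReachIn S u u := ⟨.nil, by simpa⟩

lemma right_mem (h : G.ReachIn S u v) : v ∈ S := h.elim fun p hp => hp v p.end_mem_support

lemma of_adj (hu : u ∈ S) (hv : v ∈ S) (huv : G.Adj u v) : G.ReachIn S u v :=
  ⟨.cons huv .nil, by simp [hu, hv]⟩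

lemma symm (h : G.ReachIn S u v) : G.ReachIn S v u :=
  h.elim fun p hp => ⟨p.reverse, by simpa using hp⟩

lemma trans (h : G.ReachIn S u v) (h' : G.ReachIn S v w) : G.ReachIn S u w := by
  obtain ⟨p, hp⟩ := h
  obtain ⟨q, hq⟩ := h'
  exact ⟨p.append q, fun x hx => (p.mem_support_append_iff q).1 hx |>.elim (hp x) (hq x)⟩

lemma mono (h : G.ReachIn S u v) (hS : S ⊆ S') : G.ReachIn S' u v :=
  h.elim fun p hp => ⟨p, fun x hx => hS (hp x hx)⟩

end ReachIn

lemma toSubgraph_le_induce_iff {p : G.Walk u v} :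
    p.toSubgraph ≤ (⊤ : G.Subgraph).induce S ↔ ∀ x ∈ p.support, x ∈ S :=
  ⟨fun hp _ hx => Subgraph.verts_mono hp ((p.mem_verts_toSubgraph).2 hx),
    fun hp => p.toSubgraph_le_induce_support.trans (Subgraph.induce_mono_right hp)⟩

lemma connected_induce_iff_reachIn :
    (G.induce S).Connected ↔ S.Nonempty ∧ ∀ u ∈ S, ∀ v ∈ S, G.ReachIn S u v := by
  simp only [connected_induce_iff, Subgraph.connected_iff_forall_exists_walk_subgraph,
    Subgraph.induce_verts, toSubgraph_le_induce_iff, ReachIn]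
  exact and_congr_right fun _ => ⟨fun h u hu v hv => h hu hv, fun h u v hu hv => h u hu v hv⟩

variable (G) in
def componentIn (S : Set V) (z : V) : Set V := {v | G.ReachIn S z v}

lemma componentIn_subset : G.componentIn S z ⊆ S := fun _ h => h.right_mem

lemma mem_componentIn_self (hz : z ∈ S) : z ∈ G.componentIn S z := ReachIn.refl hz

lemma componentIn_subset_componentIn (h : u ∈ G.componentIn S z) :
    G.componentIn S u ⊆ G.componentIn S z := fun _ hv => ReachIn.trans h hv

lemma mem_componentIn_of_adj (hu : u ∈ G.componentIn S z) (hv : v ∈ S) (huv : G.Adj u v) :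
    v ∈ G.componentIn S z := hu.trans (.of_adj hu.right_mem hv huv)

lemma disjoint_componentIn (hu : u ∉ G.componentIn S z) :
    Disjoint (G.componentIn S u) (G.componentIn S z) :=
  Set.disjoint_left.2 fun _ hu' hz' => hu (hz'.trans hu'.symm)

lemma reachIn_componentIn (h : G.ReachIn S z v) : G.ReachIn (G.componentIn S z) z v := by
  classical
  obtain ⟨p, hp⟩ := h
  exact ⟨p, fun x hx => ⟨p.takeUntil x hx,
    fun y hy => hp y (p.support_takeUntil_subset_support hx hy)⟩⟩

lemma connected_induce_componentIn (hz : z ∈ S) : (G.induce (G.componentIn S z)).Connected :=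
  connected_induce_iff_reachIn.2 ⟨⟨z, mem_componentIn_self hz⟩, fun _ hu _ hv =>
    (reachIn_componentIn hu).symm.trans (reachIn_componentIn hv)⟩

section RemoveVertex

variable {B : Set V} {p : V}

lemma ReachIn.insert_componentIn (h : G.ReachIn B u p) (hup : u ≠ p) :
    G.ReachIn (insert p (G.componentIn (B \ {p}) u)) u p := by
  obtain ⟨q, hq⟩ := h
  induction q with
  | nil => exact absurd rfl hup
  | @cons u c p huc q ih =>
    have hu : u ∈ B \ {p} := ⟨hq u (by simp), hup⟩
    have huC : u ∈ insert p (G.componentIn (B \ {p}) u) := .inr (mem_componentIn_self hu)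
    by_cases hcp : c = p
    · subst hcp
      exact .of_adj huC (Set.mem_insert _ _) huc
    have hc : c ∈ G.componentIn (B \ {p}) u :=
      mem_componentIn_of_adj (mem_componentIn_self hu) ⟨hq c (by simp), hcp⟩ huc
    exact (ReachIn.of_adj huC (.inr hc) huc).trans <|
      (ih hcp fun x hx => hq x (by simp [hx])).mono
        (Set.insert_subset_insert (componentIn_subset_componentIn hc))

lemma exists_adj_mem_componentIn (hB : (G.induce B).Connected) (hp : p ∈ B)
    (hz : z ∈ B \ {p}) :
    ∃ a ∈ G.componentIn (B \ {p}) z, G.Adj p a := by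
  obtain ⟨q, hq⟩ := ((connected_induce_iff_reachIn.1 hB).2 z hz.1 p hp).insert_componentIn hz.2
  have hnil : ¬ q.Nil := Walk.not_nil_of_ne hz.2
  have hadj := q.adj_penultimate hnil
  refine ⟨q.penultimate, ?_, hadj.symm⟩
  have := hq _ (q.fst_mem_support_of_mem_edges (q.mk_penultimate_end_mem_edges hnil))
  exact this.resolve_left hadj.ne

lemma connected_induce_diff_componentIn (hB : (G.induce B).Connected) (hp : p ∈ B) :
    (G.induce (B \ G.componentIn (B \ {p}) z)).Connected := by
  have hpC : p ∉ G.componentIn (B \ {p}) z := fun h => (componentIn_subset h).2 rfl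
  have hreach : ∀ u ∈ B \ G.componentIn (B \ {p}) z,
      G.ReachIn (B \ G.componentIn (B \ {p}) z) u p := by
    rintro u ⟨huB, huC⟩
    by_cases hup : u = p
    · subst hup
      exact .refl ⟨hp, hpC⟩
    refine (((connected_induce_iff_reachIn.1 hB).2 u huB p hp).insert_componentIn hup).mono ?_
    exact Set.insert_subset ⟨hp, hpC⟩ fun w hw =>
      ⟨(componentIn_subset hw).1, Set.disjoint_left.1 (disjoint_componentIn huC) hw⟩
  exact connected_induce_iff_reachIn.2 ⟨⟨p, hp, hpC⟩, fun u hu v hv =>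
    (hreach u hu).trans (hreach v hv).symm⟩

end RemoveVertex

lemma IsAcyclic.eq_of_adj_of_reachIn (hG : G.IsAcyclic) {a b : V} (hpS : p ∉ S)
    (h : G.ReachIn S a b) (ha : G.Adj p a) (hb : G.Adj p b) : a = b := by
  obtain ⟨q, hq⟩ := h
  have := isBridge_iff_forall_walk_mem_edges.1 (isAcyclic_iff_forall_adj_isBridge.1 hG hb)
    (.cons ha q)
  rw [Walk.edges_cons, List.mem_cons, Sym2.eq_iff] at this
  rcases this with (⟨-, hba⟩ | ⟨hpa, -⟩) | h
  · exact hba.symm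
  · exact absurd hpa ha.ne
  · exact absurd (hq p (q.fst_mem_support_of_mem_edges h)) hpS

lemma disjoint_edgeSet_induce_of_subset_insert_sdiff {A B : Set V} {x : V}
    (hS : S ⊆ insert x (B \ A)) :
    Disjoint ((⊤ : G.Subgraph).induce S).edgeSet ((⊤ : G.Subgraph).induce A).edgeSet := by
  have hx : ∀ u ∈ S, u ∈ A → u = x := fun u hu huA => (hS hu).resolve_right fun h => h.2 huA
  refine Set.disjoint_left.2 fun e heS heA => ?_
  induction e using Sym2.ind with
  | _ a b =>
    simp only [Subgraph.mem_edgeSet, Subgraph.induce_adj, Subgraph.top_adj] at heS heA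
    exact heA.2.2.ne ((hx a heS.1 heA.1).trans (hx b heS.2.1 heA.2.1).symm)

variable (G) in
structure IsBranch (B A : Set V) (x : V) : Prop where
  subset : A ⊆ B
  mem : x ∈ A
  connected : (G.induce A).Connected
  connected_rest : (G.induce (insert x (B \ A))).Connected
  not_adj : ∀ a ∈ A \ {x}, ∀ b ∈ B \ A, ¬ G.Adj a b

namespace IsBranch

variable {A B D : Set V} {x p : V}

lemma self (hB : (G.induce B).Connected) (hp : p ∈ B) : G.IsBranch B B p where
  subset := subset_rfl
  mem := hp
  connected := hB
  connected_rest := by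
    rw [Set.sdiff_self, insert_empty_eq]
    exact connected_induce_iff_reachIn.2 ⟨⟨p, rfl⟩, by rintro u rfl v rfl; exact .refl rfl⟩
  not_adj _ _ _ hb := absurd hb.1 hb.2

lemma rest_subset (h : G.IsBranch B A x) : insert x (B \ A) ⊆ B :=
  Set.insert_subset (h.subset h.mem) Set.sdiff_subset

lemma ncard_rest_add [Finite V] (h : G.IsBranch B A x) :
    (insert x (B \ A)).ncard + A.ncard = B.ncard + 1 := by
  rw [Set.ncard_insert_of_notMem (fun hx => hx.2 h.mem), Set.ncard_sdiff h.subset]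
  have := Set.ncard_le_ncard h.subset
  omega

lemma union (h : G.IsBranch B A x) (hD : (G.induce D).Connected) (hAD : Disjoint A D)
    (hu : u ∈ insert x (B \ A)) (hv : v ∈ D) (huv : G.Adj u v)
    (hnot : ∀ a ∈ A \ {x}, ∀ d ∈ D, ¬ G.Adj a d) : G.IsBranch (B ∪ D) A x := by
  have hrest : insert x ((B ∪ D) \ A) = insert x (B \ A) ∪ D := by
    rw [Set.union_sdiff_distrib, hAD.symm.sdiff_eq_left, Set.insert_union]
  refine ⟨h.subset.trans Set.subset_union_left, h.mem, h.connected, ?_, ?_⟩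
  · rw [hrest]
    exact connected_induce_union h.connected_rest.preconnected hD.preconnected hu hv huv
  · rintro a ha b ⟨hb | hb, hbA⟩
    exacts [h.not_adj a ha b ⟨hb, hbA⟩, hnot a ha b hb]

lemma induce_sup (h : G.IsBranch B A x) :
    (⊤ : G.Subgraph).induce A ⊔ (⊤ : G.Subgraph).induce (insert x (B \ A)) =
      (⊤ : G.Subgraph).induce B := by
  have hx : ∀ a ∈ A, ∀ b ∈ B \ A, G.Adj a b → a = x := fun a ha b hb hab =>
    by_contra fun hax => h.not_adj a ⟨ha, hax⟩ b hb hab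
  refine Subgraph.ext ?_ ?_
  · simp only [Subgraph.verts_sup, Subgraph.induce_verts]
    refine (Set.union_subset h.subset h.rest_subset).antisymm fun b hb => ?_
    by_cases hbA : b ∈ A
    exacts [.inl hbA, .inr (.inr ⟨hb, hbA⟩)]
  · ext a b
    simp only [Subgraph.sup_adj, Subgraph.induce_adj, Subgraph.top_adj]
    constructor
    · rintro (⟨ha, hb, hab⟩ | ⟨ha, hb, hab⟩)
      exacts [⟨h.subset ha, h.subset hb, hab⟩, ⟨h.rest_subset ha, h.rest_subset hb, hab⟩]
    rintro ⟨ha, hb, hab⟩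
    by_cases haA : a ∈ A <;> by_cases hbA : b ∈ A
    · exact .inl ⟨haA, hbA, hab⟩
    · exact .inr ⟨.inl (hx a haA b ⟨hb, hbA⟩ hab), .inr ⟨hb, hbA⟩, hab⟩
    · exact .inr ⟨.inr ⟨ha, haA⟩, .inl (hx b hbA a ⟨ha, haA⟩ hab.symm), hab⟩
    · exact .inr ⟨.inr ⟨ha, haA⟩, .inr ⟨hb, hbA⟩, hab⟩

lemma of_componentIn (hG : G.IsAcyclic) (hB : (G.induce B).Connected) (hp : p ∈ B)
    (h : G.IsBranch (G.componentIn (B \ {p}) z) A x) {a₀ : V}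
    (ha₀ : a₀ ∈ insert x (G.componentIn (B \ {p}) z \ A)) (hpa₀ : G.Adj p a₀) :
    G.IsBranch B A x ∧ p ∈ insert x (B \ A) := by
  set C := G.componentIn (B \ {p}) z
  have hCB : C ⊆ B \ {p} := componentIn_subset
  have hpC : p ∉ C := fun h => (hCB h).2 rfl
  have hBC := h.union (connected_induce_diff_componentIn hB hp)
    (Set.disjoint_sdiff_right.mono_left h.subset) ha₀ ⟨hp, hpC⟩ hpa₀.symm ?_
  · rw [Set.union_sdiff_cancel (hCB.trans Set.sdiff_subset)] at hBC
    exact ⟨hBC, .inr ⟨hp, fun hpA => hpC (h.subset hpA)⟩⟩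
  rintro a ⟨haA, hax⟩ d ⟨hdB, hdC⟩ had
  have haC : a ∈ C := h.subset haA
  by_cases hdp : d = p
  · subst hdp
    have ha₀C : a₀ ∈ C := h.rest_subset ha₀
    obtain rfl : a = a₀ := hG.eq_of_adj_of_reachIn (fun hd => hd.2 rfl)
      (haC.symm.trans ha₀C) had.symm hpa₀
    exact ha₀.elim hax fun ha => ha.2 haA
  · exact hdC (mem_componentIn_of_adj haC ⟨hdB, hdp⟩ had)

lemma of_sdiff_componentIn (hB : (G.induce B).Connected) (hp : p ∈ B) (hz : z ∈ B \ {p})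
    (h : G.IsBranch (B \ G.componentIn (B \ {p}) z) A x)
    (hpA : p ∈ insert x ((B \ G.componentIn (B \ {p}) z) \ A)) :
    G.IsBranch B A x ∧ p ∈ insert x (B \ A) := by
  obtain ⟨a₀, ha₀, hpa₀⟩ := exists_adj_mem_componentIn hB hp hz
  have hBC := h.union (connected_induce_componentIn hz)
    (Set.disjoint_sdiff_left.mono_left h.subset) hpA ha₀ hpa₀ ?_
  · rw [Set.sdiff_union_of_subset (componentIn_subset.trans Set.sdiff_subset)] at hBC
    exact ⟨hBC, hpA.imp_right fun hp' => ⟨hp'.1.1, hp'.2⟩⟩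
  rintro a ⟨haA, hax⟩ d hdC had
  have hap : a ≠ p := fun hap => hpA.elim (fun hpx => hax (hap.trans hpx)) fun hp' =>
    hp'.2 (hap ▸ haA)
  exact (h.subset haA).2 (mem_componentIn_of_adj hdC ⟨(h.subset haA).1, hap⟩ had.symm)

end IsBranch

theorem IsAcyclic.exists_isBranch [Finite V] (hG : G.IsAcyclic) {m : ℕ} (hm : 1 ≤ m)
    {B : Set V} (hB : (G.induce B).Connected) {p : V} (hp : p ∈ B) (hmB : m ≤ B.ncard) :
    ∃ A x, G.IsBranch B A x ∧ p ∈ insert x (B \ A) ∧ m ≤ A.ncard ∧ A.ncard ≤ 2 * m := by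
  induction hN : B.ncard using Nat.strong_induction_on generalizing B p with
  | _ N ih =>
  by_cases hsmall : B.ncard ≤ 2 * m
  · exact ⟨B, p, .self hB hp, .inl rfl, hmB, hsmall⟩
  obtain ⟨z, hzB, hzp⟩ := Set.exists_ne_of_one_lt_ncard (s := B) (by omega) p
  have hz : z ∈ B \ {p} := ⟨hzB, hzp⟩
  set C := G.componentIn (B \ {p}) z
  have hCB : C ⊆ B \ {p} := componentIn_subset
  have hpC : p ∉ C := fun h => (hCB h).2 rfl
  by_cases hCm : m ≤ C.ncard
  · obtain ⟨a₀, ha₀, hpa₀⟩ := exists_adj_mem_componentIn hB hp hz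
    have hCB' : C ⊂ B := Set.ssubset_iff_subset_ne.2
      ⟨hCB.trans Set.sdiff_subset, fun h => hpC (h ▸ hp)⟩
    obtain ⟨A, x, hA, ha₀A, hmA, hA2⟩ :=
      ih _ (hN ▸ Set.ncard_lt_ncard hCB') (connected_induce_componentIn hz) ha₀ hCm rfl
    obtain ⟨hAB, hpA⟩ := hA.of_componentIn hG hB hp ha₀A hpa₀
    exact ⟨A, x, hAB, hpA, hmA, hA2⟩
  · have hcard : (B \ C).ncard = B.ncard - C.ncard :=
      Set.ncard_sdiff (hCB.trans Set.sdiff_subset)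
    have hC : 0 < C.ncard := (Set.ncard_pos (Set.toFinite C)).2 ⟨z, mem_componentIn_self hz⟩
    obtain ⟨A, x, hA, hpA, hmA, hA2⟩ := ih (B \ C).ncard (by omega) (B := B \ C)
      (connected_induce_diff_componentIn hB hp) (p := p) ⟨hp, hpC⟩ (by omega) rfl
    obtain ⟨hAB, hpA'⟩ := hA.of_sdiff_componentIn hB hp hz hpA
    exact ⟨A, x, hAB, hpA', hmA, hA2⟩

end SimpleGraph

open SimpleGraph

/-- Let `1 ≤ m₁, m₃, m₄ ≤ n/10`. Every `n`-vertex tree `T` admits four edge-disjoint subtrees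
`T₁, T₂, T₃, T₄` whose edge sets cover `E(T)`, with `mᵢ ≤ |V(Tᵢ)| ≤ 3mᵢ` for `i ∈ {1, 3, 4}`,
and such that `T₁ ∪ T₂` and `T₁ ∪ T₂ ∪ T₃` are connected trees. -/
theorem tree_four_split (n m₁ m₃ m₄ : ℕ)
    (hm₁ : 1 ≤ m₁) (hm₃ : 1 ≤ m₃) (hm₄ : 1 ≤ m₄)
    (hm₁' : (m₁ : ℝ) ≤ n / 10) (hm₃' : (m₃ : ℝ) ≤ n / 10) (hm₄' : (m₄ : ℝ) ≤ n / 10)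
    (T : SimpleGraph (Fin n)) (hT : T.IsTree) :
    ∃ T₁ T₂ T₃ T₄ : T.Subgraph,
      T₁.Connected ∧ T₂.Connected ∧ T₃.Connected ∧ T₄.Connected ∧
      Disjoint T₁.edgeSet T₂.edgeSet ∧ Disjoint T₁.edgeSet T₃.edgeSet ∧
      Disjoint T₁.edgeSet T₄.edgeSet ∧ Disjoint T₂.edgeSet T₃.edgeSet ∧
      Disjoint T₂.edgeSet T₄.edgeSet ∧ Disjoint T₃.edgeSet T₄.edgeSet ∧
      T₁.edgeSet ∪ T₂.edgeSet ∪ T₃.edgeSet ∪ T₄.edgeSet = T.edgeSet ∧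
      (m₁ ≤ T₁.verts.ncard ∧ T₁.verts.ncard ≤ 3 * m₁) ∧
      (m₃ ≤ T₃.verts.ncard ∧ T₃.verts.ncard ≤ 3 * m₃) ∧
      (m₄ ≤ T₄.verts.ncard ∧ T₄.verts.ncard ≤ 3 * m₄) ∧
      (T₁ ⊔ T₂).Connected ∧ (T₁ ⊔ T₂ ⊔ T₃).Connected := by
  have h10 : ∀ {m : ℕ}, (m : ℝ) ≤ n / 10 → 10 * m ≤ n := fun {m} hm => by
    exact_mod_cast (by linarith : (10 * m : ℝ) ≤ n)
  have hn₁ := h10 hm₁'; have hn₃ := h10 hm₃'; have hn₄ := h10 hm₄'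
  obtain ⟨A₄, x₄, hA₄, -, hA₄m, hA₄M⟩ := hT.isAcyclic.exists_isBranch hm₄
    ((induceUnivIso T).connected_iff.2 hT.connected) (Set.mem_univ ⟨0, by omega⟩) (by simp; omega)
  have hB₁ := hA₄.ncard_rest_add
  obtain ⟨A₃, x₃, hA₃, -, hA₃m, hA₃M⟩ := hT.isAcyclic.exists_isBranch hm₃
    hA₄.connected_rest (Set.mem_insert _ _) (by simp at hB₁; omega)
  have hB₂ := hA₃.ncard_rest_add
  obtain ⟨A₁, x₁, hA₁, -, hA₁m, hA₁M⟩ := hT.isAcyclic.exists_isBranch hm₁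
    hA₃.connected_rest (Set.mem_insert _ _) (by simp at hB₁; omega)
  set B₁ := insert x₄ (Set.univ \ A₄)
  set B₂ := insert x₃ (B₁ \ A₃)
  set A₂ := insert x₁ (B₂ \ A₁)
  have h₁₂ := hA₁.induce_sup
  have h₁₂₃ : (⊤ : T.Subgraph).induce A₁ ⊔ (⊤ : T.Subgraph).induce A₂ ⊔
      (⊤ : T.Subgraph).induce A₃ = (⊤ : T.Subgraph).induce B₁ := by
    rw [h₁₂, sup_comm, hA₃.induce_sup]
  refine ⟨_, _, _, _, connected_induce_iff.1 hA₁.connected,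
    connected_induce_iff.1 hA₁.connected_rest, connected_induce_iff.1 hA₃.connected,
    connected_induce_iff.1 hA₄.connected,
    (disjoint_edgeSet_induce_of_subset_insert_sdiff subset_rfl).symm,
    disjoint_edgeSet_induce_of_subset_insert_sdiff hA₁.subset,
    disjoint_edgeSet_induce_of_subset_insert_sdiff (hA₁.subset.trans hA₃.rest_subset),
    disjoint_edgeSet_induce_of_subset_insert_sdiff hA₁.rest_subset,
    disjoint_edgeSet_induce_of_subset_insert_sdiff (hA₁.rest_subset.trans hA₃.rest_subset),
    disjoint_edgeSet_induce_of_subset_insert_sdiff hA₃.subset, ?_,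
    ⟨hA₁m, by simp; omega⟩, ⟨hA₃m, by simp; omega⟩, ⟨hA₄m, by simp; omega⟩,
    h₁₂ ▸ connected_induce_iff.1 hA₃.connected_rest,
    h₁₂₃ ▸ connected_induce_iff.1 hA₄.connected_rest⟩
  rw [← Subgraph.edgeSet_sup, ← Subgraph.edgeSet_sup, ← Subgraph.edgeSet_sup, h₁₂₃, sup_comm,
    hA₄.induce_sup, ← Subgraph.edgeSet_top]
  exact congrArg _ Subgraph.induce_self_verts
end

section
/- Let m, n ∈ ℕ satisfy m ≤ n − 1. Let 𝒢 = (G₁, …, G_m) be a graph collection on the vertex set [n] with δ(𝒢) ≥ m. Let T be a tree with exactly m edges, let t ∈ V(T) and v ∈ [n]. Then there is a copy S of T in ∪_{i∈[m]} G_i in which t is copied to v, together with a bijection ψ: E(S) → [m] such that e ∈ E(G_{ψ(e)}) for each edge e of S (i.e., a rainbow copy of T using every colour in [m]). -/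
open SimpleGraph

/-!
Order the vertices of `T` by their distance from `t`, so that the `(c+1)`-st vertex has a
neighbour (its parent) among the first `c+1`; the edge to its parent gets colour `c`. Embed
the vertices greedily in this order starting at `v`: when the `(c+1)`-st vertex is placed,
only `c+1` vertices of `[n]` are occupied, one of them the image `u` of its parent, while `u`
has at least `m > c` neighbours in `G_c`, so one of them is still free.
-/

lemma injective_parent_edge {V : Type*} {m : ℕ} {g : Fin (m + 1) → V}
    (hg : Function.Injective g) {p : Fin m → Fin (m + 1)} (hp : ∀ c, p c ≤ c.castSucc) :
    Function.Injective fun c => s(g (p c), g c.succ) := by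
  intro c₁ c₂ h
  rcases Sym2.eq_iff.mp h with ⟨-, h⟩ | ⟨h₁, h₂⟩
  · exact Fin.succ_injective _ (hg h)
  · -- a swapped pair would give `c₂ + 1 = p c₁ ≤ c₁ < c₁ + 1 = p c₂ ≤ c₂`
    have h₁ := hg h₁
    have h₂ := hg h₂
    have := hp c₁
    have := hp c₂
    simp only [Fin.ext_iff, Fin.le_def, Fin.val_succ, Fin.val_castSucc] at *
    omega

namespace SimpleGraph

variable {V : Type*} {G : SimpleGraph V}

lemma Reachable.exists_adj_dist_lt {t w : V} (h : G.Reachable w t) (hw : w ≠ t) :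
    ∃ u, G.Adj u w ∧ G.dist t u < G.dist t w := by
  obtain ⟨p, hp⟩ := h.exists_walk_length_eq_dist
  cases p with
  | nil => exact absurd rfl hw
  | cons hadj q =>
    refine ⟨_, hadj.symm, ?_⟩
    rw [dist_comm, G.dist_comm (u := t)]
    have := dist_le q
    rw [Walk.length_cons] at hp
    omega

lemma exists_adj_notMem_of_ncard_le_deg {s : Set V} (hs : s.Finite) {u : V} (hu : u ∈ s)
    (hdeg : s.ncard ≤ deg G u) : ∃ w, G.Adj u w ∧ w ∉ s := by
  by_contra! hsub
  have hN : G.neighborSet u ⊆ s \ {u} := fun w hw => ⟨hsub w hw, (G.ne_of_adj hw).symm⟩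
  have := Set.ncard_le_ncard hN hs.sdiff
  have := Set.ncard_sdiff_singleton_lt_of_mem hu hs
  unfold deg at hdeg
  omega

theorem exists_injective_rainbow_embedding {W : Type*} {m : ℕ} (G : Fin m → SimpleGraph W)
    (hdeg : ∀ (c : Fin m) x, (c : ℕ) < deg (G c) x) (p : Fin m → Fin (m + 1))
    (hp : ∀ c, p c ≤ c.castSucc) (v : W) :
    ∃ F : Fin (m + 1) → W, Function.Injective F ∧ F 0 = v ∧
      ∀ c, (G c).Adj (F (p c)) (F c.succ) := by
  induction m with
  | zero => exact ⟨fun _ => v, fun _ _ _ => Fin.ext (by omega), rfl, fun c => c.elim0⟩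
  | succ m ih =>
    have hp_lt : ∀ c : Fin (m + 1), (p c : ℕ) < m + 1 := fun c =>
      (hp c).trans_lt c.castSucc_lt_last
    obtain ⟨F, hF, hF0, hFadj⟩ := ih (G ∘ Fin.castSucc) (fun c => hdeg c.castSucc)
      (fun c => (p c.castSucc).castLT (hp_lt _)) (fun c => hp c.castSucc)
    set u := F ((p (Fin.last m)).castLT (hp_lt _))
    obtain ⟨w, huw, hw⟩ := exists_adj_notMem_of_ncard_le_deg (Set.finite_range F)
      (Set.mem_range_self _) (u := u)
      (by rw [Set.ncard_range_of_injective hF, Nat.card_fin]; exact hdeg (Fin.last m) u)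
    refine ⟨Fin.snoc F w, Fin.snoc_injective_of_injective hF hw, ?_, fun c => ?_⟩
    · simpa using hF0
    induction c using Fin.lastCases with
    | last =>
      rw [← Fin.castSucc_castLT (p _) (hp_lt _), Fin.succ_last, Fin.snoc_castSucc, Fin.snoc_last]
      exact huw
    | cast c =>
      rw [← Fin.castSucc_castLT (p _) (hp_lt _), Fin.succ_castSucc, Fin.snoc_castSucc,
        Fin.snoc_castSucc]
      exact hFadj c

lemma Connected.exists_equiv_fin_parent [Finite V] {m : ℕ} (hG : G.Connected)
    (hV : Nat.card V = m + 1) (t : V) :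
    ∃ (g : Fin (m + 1) ≃ V) (p : Fin m → Fin (m + 1)),
      g 0 = t ∧ ∀ c, p c ≤ c.castSucc ∧ G.Adj (g (p c)) (g c.succ) := by
  let e := Finite.equivFinOfCardEq hV
  let d : Fin (m + 1) → ℕ := fun i => G.dist t (e.symm i)
  let g : Fin (m + 1) ≃ V := (Tuple.sort d).trans e.symm
  have hmono : Monotone fun i => G.dist t (g i) := Tuple.monotone_sort d
  have hg0 : g 0 = t := by
    have := hmono (Fin.zero_le (g.symm t))
    simp only [Equiv.apply_symm_apply, dist_self, nonpos_iff_eq_zero] at this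
    exact (hG.dist_eq_zero_iff.mp this).symm
  have parent (c : Fin m) : ∃ i, i ≤ c.castSucc ∧ G.Adj (g i) (g c.succ) := by
    have hne : g c.succ ≠ t := by
      rw [← hg0]; exact g.injective.ne (Fin.succ_ne_zero c)
    obtain ⟨u, hu, hlt⟩ := (hG.preconnected _ _).exists_adj_dist_lt hne
    refine ⟨g.symm u, ?_, by rwa [g.apply_symm_apply]⟩
    rw [Fin.le_castSucc_iff]
    by_contra! h
    have := hmono h
    simp only [Equiv.apply_symm_apply] at this
    omega
  choose p hp using parent
  exact ⟨g, p, hg0, hp⟩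

end SimpleGraph

theorem rainbow_tree_exact_colours_general (m n : ℕ)
    (𝒢 : Fin m → SimpleGraph (Fin n))
    (hdeg : ∀ i v, m ≤ deg (𝒢 i) v)
    {VT : Type*} [Fintype VT] (T : SimpleGraph VT) (hT : T.IsTree)
    (hTm : T.edgeSet.ncard = m) (t : VT) (v : Fin n) :
    ∃ (f : VT → Fin n) (ψ : T.edgeSet → Fin m),
      Function.Injective f ∧ f t = v ∧ Function.Bijective ψ ∧
      ∀ e : T.edgeSet, Sym2.map f (e : Sym2 VT) ∈ (𝒢 (ψ e)).edgeSet := by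
  have hV : Nat.card VT = m + 1 := by
    rw [← hTm, ← Nat.card_coe_set_eq]
    exact (isTree_iff_connected_and_card.mp hT).2.symm
  obtain ⟨g, p, hg0, hp⟩ := hT.connected.exists_equiv_fin_parent hV t
  obtain ⟨F, hF, hF0, hFadj⟩ := exists_injective_rainbow_embedding 𝒢
    (fun c x => c.isLt.trans_le (hdeg c x)) p (fun c => (hp c).1) v
  let φ : Fin m → T.edgeSet := fun c => ⟨s(g (p c), g c.succ), (hp c).2⟩
  have hφ : Function.Bijective φ := by
    refine (Nat.bijective_iff_injective_and_card φ).mpr ⟨fun c₁ c₂ h =>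
      injective_parent_edge g.injective (fun c => (hp c).1) (congrArg Subtype.val h), ?_⟩
    rw [Nat.card_coe_set_eq, hTm, Nat.card_fin]
  let E := Equiv.ofBijective φ hφ
  refine ⟨F ∘ g.symm, E.symm, hF.comp g.symm.injective, by simp [← hg0, hF0],
    E.symm.bijective, fun e => ?_⟩
  obtain ⟨c, rfl⟩ := E.surjective e
  simpa [E, φ] using hFadj c

/-- Let `m ≤ n - 1` and let `𝒢 = (G_1, …, G_m)` be a graph collection on `[n]` with
`δ(𝒢) ≥ m`. Then for every tree `T` with exactly `m` edges, every `t ∈ V(T)` and every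
`v ∈ [n]` there is a copy of `T` in `∪ᵢ Gᵢ` in which `t` is copied to `v`, together with a
bijection `ψ : E(T) → [m]` assigning each edge a distinct colour containing its copy. -/
theorem rainbow_tree_exact_colours (m n : ℕ) (hmn : m ≤ n - 1)
    (𝒢 : Fin m → SimpleGraph (Fin n))
    (hdeg : ∀ i v, m ≤ deg (𝒢 i) v)
    {VT : Type*} [Fintype VT] (T : SimpleGraph VT) (hT : T.IsTree)
    (hTm : T.edgeSet.ncard = m) (t : VT) (v : Fin n) :
    ∃ (f : VT → Fin n) (ψ : T.edgeSet → Fin m),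
      Function.Injective f ∧ f t = v ∧ Function.Bijective ψ ∧
      ∀ e : T.edgeSet, Sym2.map f (e : Sym2 VT) ∈ (𝒢 (ψ e)).edgeSet :=
  rainbow_tree_exact_colours_general m n 𝒢 hdeg T hT hTm t v
end
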